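/- arXiv:1611.00984 — 5 statements merged into one kernel-verified Lean document; each statement's English description precedes it below -/
import Mathlib

section
/- Let (X,A,λ) be a finite measure space and p > 1. For each n, let (ν^n_z)_{z∈X} be a measurable family of Borel probability measures on ℝ (a Young measure on X), and assume the uniform moment bound sup_n ∫_X ∫_ℝ |ξ|^p dν^n_z(ξ) dλ(z) < ∞. Set f_n(z,ξ) = ν^n_z((ξ,+∞)). Let u : X → ℝ be measurable and suppose f_n converges to the equilibrium function f(z,ξ) = 1_{u(z)>ξ} in L^∞(X×ℝ) weak-*, i.e. ∫_X ∫_ℝ f_n(z,ξ) g(z,ξ) dξ dλ(z) → ∫_X ∫_ℝ 1_{u(z)>ξ} g(z,ξ) dξ dλ(z) for every g ∈ L¹(X×ℝ, λ⊗Lebesgue). Then for every 1 ≤ q < p, the barycenters u_n(z) := ∫_ℝ ξ dν^n_z(ξ) converge to u in L^q(X,λ). -/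
open MeasureTheory Filter

namespace Lem213

open Set
open scoped ENNReal


noncomputable def T (R s : ℝ) : ℝ := max (min s R) (-R)

lemma T_add (R s : ℝ) : T R s + R = max (min s R + R) 0 := by
  unfold T
  rcases le_total (min s R) (-R) with h | h
  · rw [max_eq_right h, max_eq_right (by linarith)]; ring
  · rw [max_eq_left h, max_eq_left (by linarith)]

lemma T_cont (R : ℝ) : Continuous (T R) :=
  (continuous_id.min continuous_const).max continuous_const

lemma abs_T_le (R s : ℝ) : |T R s| ≤ |R| := by
  unfold T
  rw [abs_le]
  constructor
  · exact le_max_of_le_right (neg_le_neg (le_abs_self R))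
  · exact max_le ((min_le_right _ _).trans (le_abs_self R)) ((neg_le_abs R))

lemma abs_T_le_abs (R s : ℝ) (hR : 0 ≤ R) : |T R s| ≤ |s| := by
  unfold T
  rw [abs_le]
  constructor
  · refine le_max_of_le_left (le_min (neg_abs_le s) ?_)
    exact (neg_nonpos.mpr (abs_nonneg s)).trans hR
  · exact max_le ((min_le_left _ _).trans (le_abs_self s))
      ((neg_nonpos.mpr hR).trans (abs_nonneg s))

lemma abs_sub_T (R s : ℝ) (hR : 0 ≤ R) : |s - T R s| = max (|s| - R) 0 := by
  unfold T
  rcases le_total s (-R) with h | h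
  · rw [min_eq_left (h.trans (by linarith)), max_eq_right h]
    rw [abs_of_nonpos (by linarith), abs_of_nonpos (by linarith),
      max_eq_left (by linarith)]
    ring
  · rcases le_total s R with h2 | h2
    · rw [min_eq_left h2, max_eq_left h]
      simp only [sub_self, abs_zero]
      rw [max_eq_right]
      rcases le_total 0 s with h3 | h3
      · rw [abs_of_nonneg h3]; linarith
      · rw [abs_of_nonpos h3]; linarith
    · rw [min_eq_right h2, max_eq_left (by linarith)]
      rw [abs_of_nonneg (by linarith), abs_of_nonneg (by linarith : (0:ℝ) ≤ s),
        max_eq_left (by linarith)]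

lemma jensen_rpow {μ : Measure ℝ} [IsProbabilityMeasure μ] {g : ℝ → ℝ≥0∞}
    (hg : AEMeasurable g μ) {q : ℝ} (hq : 1 ≤ q) :
    (∫⁻ s, g s ∂μ) ^ q ≤ ∫⁻ s, g s ^ q ∂μ := by
  rcases eq_or_lt_of_le hq with h1 | h1
  · simp [← h1]
  · have hq0 : q ≠ 0 := by linarith
    have hpq : q.HolderConjugate (q / (q - 1)) := Real.HolderConjugate.conjExponent h1
    have := ENNReal.lintegral_mul_le_Lp_mul_Lq μ hpq hg aemeasurable_const (g := fun _ => 1)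
    simp only [Pi.mul_apply, mul_one, ENNReal.one_rpow, lintegral_one, measure_univ] at this
    calc (∫⁻ s, g s ∂μ) ^ q ≤ ((∫⁻ s, g s ^ q ∂μ) ^ (1/q)) ^ q := by
          exact ENNReal.rpow_le_rpow this (by linarith)
    _ = ∫⁻ s, g s ^ q ∂μ := by
          rw [← ENNReal.rpow_mul, one_div_mul_cancel hq0, ENNReal.rpow_one]

lemma rpow_le_mul_of_le {x M q : ℝ} (hx : 0 ≤ x) (hxM : x ≤ M) (hq : 1 ≤ q) :
    x ^ q ≤ M ^ (q - 1) * x := by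
  rcases eq_or_lt_of_le hx with h0 | h0
  · rw [← h0, Real.zero_rpow (by linarith), mul_zero]
  · have e1 : x ^ q = x ^ (q - 1) * x := by
      rw [← Real.rpow_add_one h0.ne' (q - 1)]
      ring_nf
    rw [e1]
    exact mul_le_mul_of_nonneg_right (Real.rpow_le_rpow hx hxM (by linarith)) h0.le

lemma max_sub_rpow_le {s R p q : ℝ} (hR : 1 ≤ R) (hq : 1 ≤ q) (hqp : q ≤ p) :
    max (|s| - R) 0 ^ q ≤ R ^ (q - p) * |s| ^ p := by
  rcases le_or_gt |s| R with h | h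
  · rw [max_eq_right (by linarith), Real.zero_rpow (by linarith)]
    positivity
  · rw [max_eq_left (by linarith)]
    have hs0 : (0:ℝ) < |s| := by linarith
    calc (|s| - R) ^ q ≤ |s| ^ q := Real.rpow_le_rpow (by linarith) (by linarith) (by linarith)
    _ = |s| ^ (q - p) * |s| ^ p := by rw [← Real.rpow_add hs0]; ring_nf
    _ ≤ R ^ (q - p) * |s| ^ p := by
        refine mul_le_mul_of_nonneg_right ?_ (by positivity)
        exact Real.rpow_le_rpow_of_nonpos (by linarith) h.le (by linarith)

lemma rpow_le_one_add_rpow {s q p : ℝ} (hq : 0 ≤ q) (hqp : q ≤ p) :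
    |s| ^ q ≤ 1 + |s| ^ p := by
  rcases le_or_gt |s| 1 with h | h
  · have h1 : |s| ^ q ≤ 1 := Real.rpow_le_one (abs_nonneg _) h hq
    have h2 : (0:ℝ) ≤ |s| ^ p := Real.rpow_nonneg (abs_nonneg _) _
    linarith
  · have h1 : |s| ^ q ≤ |s| ^ p := Real.rpow_le_rpow_of_exponent_le h.le hqp
    linarith

lemma abs_le_one_add_rpow {s p : ℝ} (hp : 1 ≤ p) : |s| ≤ 1 + |s| ^ p := by
  have := rpow_le_one_add_rpow (s := s) (zero_le_one) hp
  rwa [Real.rpow_one] at this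

lemma three_rpow (a b c : ℝ≥0∞) {q : ℝ} (hq : 1 ≤ q) :
    (a + b + c) ^ q ≤ 2 ^ (q-1) * 2 ^ (q-1) * (a ^ q + b ^ q + c ^ q) := by
  have h2 : (1 : ℝ≥0∞) ≤ 2 ^ (q-1) := by
    calc (1:ℝ≥0∞) = 2 ^ (0:ℝ) := by simp
    _ ≤ 2 ^ (q-1) := ENNReal.rpow_le_rpow_of_exponent_le (by norm_num) (by linarith)
  calc (a + b + c) ^ q ≤ 2 ^ (q-1) * ((a + b) ^ q + c ^ q) :=
        ENNReal.rpow_add_le_mul_rpow_add_rpow _ _ hq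
  _ ≤ 2 ^ (q-1) * ((2 ^ (q-1) * (a ^ q + b ^ q)) + c ^ q) := by
        gcongr
        exact ENNReal.rpow_add_le_mul_rpow_add_rpow _ _ hq
  _ ≤ 2 ^ (q-1) * ((2 ^ (q-1) * (a ^ q + b ^ q)) + 2 ^ (q-1) * c ^ q) := by
        gcongr
        exact le_mul_of_one_le_left' h2
  _ = 2 ^ (q-1) * 2 ^ (q-1) * (a ^ q + b ^ q + c ^ q) := by ring

lemma ofReal_max_zero (x : ℝ) : ENNReal.ofReal (max x 0) = ENNReal.ofReal x := by
  rcases le_total x 0 with h | h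
  · rw [max_eq_right h, ENNReal.ofReal_of_nonpos h]; simp
  · rw [max_eq_left h]

lemma integrable_T (μ : Measure ℝ) [IsProbabilityMeasure μ] (R : ℝ) :
    Integrable (T R) μ := by
  refine Integrable.mono' (integrable_const |R|) ((T_cont R).aestronglyMeasurable) ?_
  exact ae_of_all _ fun s => by simpa [Real.norm_eq_abs] using abs_T_le R s



-- (T defined above)

lemma T_add_nonneg (R s : ℝ) : 0 ≤ T R s + R := by rw [T_add]; exact le_max_right _ _

lemma integrable_T_add (μ : Measure ℝ) [IsProbabilityMeasure μ] (R : ℝ) :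
    Integrable (fun s => T R s + R) μ :=
  (integrable_T μ R).add (integrable_const R)

lemma lintegral_Ioi_trunc (μ : Measure ℝ) [IsProbabilityMeasure μ] {R : ℝ} (hR : 0 ≤ R) :
    ∫⁻ ξ in Ioo (-R) R, μ (Ioi ξ) = ENNReal.ofReal (∫ s, (T R s + R) ∂μ) := by
  set f : ℝ × ℝ → ℝ≥0∞ := fun p => if p.1 < p.2 then 1 else 0 with hf
  have hfm : Measurable f :=
    Measurable.ite (measurableSet_lt measurable_fst measurable_snd) measurable_const
      measurable_const
  have h1 : ∀ ξ : ℝ, μ (Ioi ξ) = ∫⁻ s, f (ξ, s) ∂μ := by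
    intro ξ
    have : ∀ s : ℝ, f (ξ, s) = (Ioi ξ).indicator (1 : ℝ → ℝ≥0∞) s := by
      intro s; simp [hf, Set.indicator_apply, Set.mem_Ioi]
    simp_rw [this]
    rw [lintegral_indicator_one measurableSet_Ioi]
  have h2 : ∀ s : ℝ, (∫⁻ ξ in Ioo (-R) R, f (ξ, s)) = ENNReal.ofReal (T R s + R) := by
    intro s
    have e : ∀ ξ : ℝ, f (ξ, s) = (Iio s).indicator (1 : ℝ → ℝ≥0∞) ξ := by
      intro ξ; simp [hf, Set.indicator_apply, Set.mem_Iio]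
    simp_rw [e]
    rw [lintegral_indicator_one measurableSet_Iio, Measure.restrict_apply measurableSet_Iio]
    have hset : Iio s ∩ Ioo (-R) R = Ioo (-R) (min s R) := by
      ext x
      simp only [Set.mem_inter_iff, Set.mem_Iio, Set.mem_Ioo, lt_min_iff]
      tauto
    rw [hset, Real.volume_Ioo, T_add, ofReal_max_zero]
    norm_num
  calc ∫⁻ ξ in Ioo (-R) R, μ (Ioi ξ) = ∫⁻ ξ in Ioo (-R) R, ∫⁻ s, f (ξ, s) ∂μ := by
        simp_rw [h1]
  _ = ∫⁻ s, (∫⁻ ξ in Ioo (-R) R, f (ξ, s)) ∂μ := by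
        exact lintegral_lintegral_swap (f := fun ξ s => f (ξ, s))
          ((hfm.comp (measurable_fst.prodMk measurable_snd)).aemeasurable)
  _ = ∫⁻ s, ENNReal.ofReal (T R s + R) ∂μ := by simp_rw [h2]
  _ = ENNReal.ofReal (∫ s, (T R s + R) ∂μ) :=
        (ofReal_integral_eq_lintegral_ofReal (integrable_T_add μ R)
          (ae_of_all _ fun s => T_add_nonneg R s)).symm

lemma meas_toReal_Ioi (μ : Measure ℝ) [IsFiniteMeasure μ] :
    Measurable fun ξ => (μ (Ioi ξ)).toReal := by
  have : Antitone fun ξ => (μ (Ioi ξ)).toReal := by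
    intro a b hab
    exact ENNReal.toReal_mono (measure_ne_top μ _) (measure_mono (Ioi_subset_Ioi hab))
  exact this.measurable

lemma integral_trunc_eq (μ : Measure ℝ) [IsProbabilityMeasure μ] {R : ℝ} (hR : 0 ≤ R) :
    ∫ ξ in Ioo (-R) R, (μ (Ioi ξ)).toReal = (∫ s, T R s ∂μ) + R := by
  have h1 : ∫ ξ in Ioo (-R) R, (μ (Ioi ξ)).toReal
      = (∫⁻ ξ in Ioo (-R) R, ENNReal.ofReal ((μ (Ioi ξ)).toReal)).toReal :=
    integral_eq_lintegral_of_nonneg_ae (ae_of_all _ fun ξ => ENNReal.toReal_nonneg)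
      (meas_toReal_Ioi μ).aestronglyMeasurable
  have h2 : ∀ ξ : ℝ, ENNReal.ofReal ((μ (Ioi ξ)).toReal) = μ (Ioi ξ) := fun ξ =>
    ENNReal.ofReal_toReal (measure_ne_top μ _)
  rw [h1]
  simp_rw [h2]
  rw [lintegral_Ioi_trunc μ hR, ENNReal.toReal_ofReal
    (integral_nonneg fun s => T_add_nonneg R s),
    integral_add (integrable_T μ R) (integrable_const R), integral_const]
  simp

lemma integral_chi (a : ℝ) {R : ℝ} (hR : 0 ≤ R) :
    ∫ ξ in Ioo (-R) R, (if ξ < a then (1:ℝ) else 0) = T R a + R := by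
  have e : ∀ ξ : ℝ, (if ξ < a then (1:ℝ) else 0) = (Iio a).indicator (fun _ => (1:ℝ)) ξ := by
    intro ξ; simp [Set.indicator_apply, Set.mem_Iio]
  simp_rw [e]
  rw [setIntegral_indicator measurableSet_Iio]
  have hset : Ioo (-R) R ∩ Iio a = Ioo (-R) (min a R) := by
    ext x
    simp only [Set.mem_inter_iff, Set.mem_Iio, Set.mem_Ioo, lt_min_iff]
    tauto
  rw [hset, setIntegral_const, measureReal_def, Real.volume_Ioo, smul_eq_mul, mul_one, T_add]
  rcases le_total (min a R + R) 0 with h | h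
  · rw [max_eq_right h, ENNReal.ofReal_of_nonpos (by linarith)]; simp
  · rw [max_eq_left h, ENNReal.toReal_ofReal (by linarith)]; ring_nf



-- (T defined above)
instance finIoo (R : ℝ) : IsFiniteMeasure (volume.restrict (Ioo (-R) R)) := by
  constructor
  rw [Measure.restrict_apply_univ, Real.volume_Ioo]
  exact ENNReal.ofReal_lt_top

lemma bdiff_eq (μ : Measure ℝ) [IsProbabilityMeasure μ] (a : ℝ) {R : ℝ} (hR : 0 ≤ R) :
    (∫ s, T R s ∂μ) - T R a
      = ∫ ξ in Ioo (-R) R, ((μ (Ioi ξ)).toReal - (if ξ < a then (1:ℝ) else 0)) := by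
  have h1 : Integrable (fun ξ => (μ (Ioi ξ)).toReal) (volume.restrict (Ioo (-R) R)) := by
    refine Integrable.mono' (integrable_const 1) (meas_toReal_Ioi μ).aestronglyMeasurable
      (ae_of_all _ fun ξ => ?_)
    rw [Real.norm_eq_abs, abs_of_nonneg ENNReal.toReal_nonneg]
    exact ENNReal.toReal_le_of_le_ofReal zero_le_one (by simpa using prob_le_one)
  have h2 : Integrable (fun ξ => (if ξ < a then (1:ℝ) else 0)) (volume.restrict (Ioo (-R) R)) := by
    refine Integrable.mono' (integrable_const 1)
      ((Measurable.ite measurableSet_Iio measurable_const measurable_const).aestronglyMeasurable)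
      (ae_of_all _ fun ξ => ?_)
    by_cases h : ξ < a <;> simp [h]
  rw [integral_sub h1 h2, integral_trunc_eq μ hR, integral_chi a hR]
  ring

lemma E1 {X : Type*} [MeasurableSpace X] (lam : Measure X) [IsFiniteMeasure lam]
    (w : X → Measure ℝ) (hprob : ∀ z, IsProbabilityMeasure (w z))
    (hGm : Measurable fun zξ : X × ℝ => w zξ.1 (Set.Ioi zξ.2))
    (u : X → ℝ) (hu : Measurable u) {R : ℝ} (hR : 0 ≤ R) :
    ∫⁻ z, ENNReal.ofReal |(∫ s, T R s ∂w z) - T R (u z)| ∂lam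
      ≤ ENNReal.ofReal (∫ zξ : X × ℝ,
          |(w zξ.1 (Set.Ioi zξ.2)).toReal - (if zξ.2 < u zξ.1 then (1:ℝ) else 0)|
            * (if zξ.2 ∈ Set.Ioo (-R) R then (1:ℝ) else 0) ∂(lam.prod volume)) := by
  haveI := hprob
  have hg0m : Measurable fun zξ : X × ℝ => (if zξ.2 ∈ Set.Ioo (-R) R then (1:ℝ) else 0) :=
    Measurable.ite (measurable_snd measurableSet_Ioo) measurable_const measurable_const
  have hχm : Measurable fun zξ : X × ℝ => (if zξ.2 < u zξ.1 then (1:ℝ) else 0) :=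
    Measurable.ite (measurableSet_lt measurable_snd (hu.comp measurable_fst)) measurable_const
      measurable_const
  set D : X × ℝ → ℝ := fun zξ =>
    |(w zξ.1 (Set.Ioi zξ.2)).toReal - (if zξ.2 < u zξ.1 then (1:ℝ) else 0)|
      * (if zξ.2 ∈ Set.Ioo (-R) R then (1:ℝ) else 0) with hD
  have hDm : Measurable D := ((hGm.ennreal_toReal.sub hχm).abs).mul hg0m
  have hDnn : ∀ zξ, 0 ≤ D zξ := by
    intro zξ
    apply mul_nonneg (abs_nonneg _)
    split <;> norm_num
  have habs_le_one : ∀ zξ : X × ℝ,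
      |(w zξ.1 (Set.Ioi zξ.2)).toReal - (if zξ.2 < u zξ.1 then (1:ℝ) else 0)| ≤ 1 := by
    intro zξ
    have h0 : (0:ℝ) ≤ (w zξ.1 (Set.Ioi zξ.2)).toReal := ENNReal.toReal_nonneg
    have h1 : (w zξ.1 (Set.Ioi zξ.2)).toReal ≤ 1 :=
      ENNReal.toReal_le_of_le_ofReal zero_le_one (by simpa using prob_le_one)
    rw [abs_le]
    constructor <;> (by_cases h : zξ.2 < u zξ.1 <;> simp [h] <;> linarith)
  have hg0int : Integrable (fun zξ : X × ℝ => (if zξ.2 ∈ Set.Ioo (-R) R then (1:ℝ) else 0))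
      (lam.prod volume) := by
    have he : (fun zξ : X × ℝ => (if zξ.2 ∈ Set.Ioo (-R) R then (1:ℝ) else 0))
        = Set.indicator (Prod.snd ⁻¹' Set.Ioo (-R) R) (fun _ => (1:ℝ)) := by
      ext zξ
      by_cases h : zξ.2 ∈ Set.Ioo (-R) R <;> simp [Set.indicator_apply, h]
    rw [he, integrable_indicator_iff (measurable_snd measurableSet_Ioo)]
    refine (integrableOn_const_iff (C := (1:ℝ))).2 (Or.inr ?_)
    rw [← Set.univ_prod, Measure.prod_prod, Real.volume_Ioo]
    exact ENNReal.mul_lt_top (measure_lt_top lam _) ENNReal.ofReal_lt_top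
  have hDint : Integrable D (lam.prod volume) := by
    refine Integrable.mono' hg0int hDm.aestronglyMeasurable (ae_of_all _ fun zξ => ?_)
    rw [Real.norm_eq_abs, abs_of_nonneg (hDnn zξ), hD]
    simp only
    by_cases h : zξ.2 ∈ Set.Ioo (-R) R
    · simp only [h, if_true, mul_one]
      exact habs_le_one zξ
    · simp [h]
  -- turn RHS into iterated lintegral
  have hRHS : ENNReal.ofReal (∫ zξ : X × ℝ, D zξ ∂(lam.prod volume))
      = ∫⁻ z, (∫⁻ ξ in Ioo (-R) R, ENNReal.ofReal
          |(w z (Set.Ioi ξ)).toReal - (if ξ < u z then (1:ℝ) else 0)|) ∂lam := by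
    rw [ofReal_integral_eq_lintegral_ofReal hDint (ae_of_all _ hDnn),
      lintegral_prod _ (hDm.ennreal_ofReal.aemeasurable)]
    refine lintegral_congr fun z => ?_
    have he : ∀ ξ : ℝ, ENNReal.ofReal (D (z, ξ))
        = (Ioo (-R) R).indicator (fun ξ => ENNReal.ofReal
            |(w z (Set.Ioi ξ)).toReal - (if ξ < u z then (1:ℝ) else 0)|) ξ := by
      intro ξ
      by_cases h : ξ ∈ Ioo (-R) R
      · have h' := Set.mem_Ioo.mp h
        simp [hD, Set.indicator_apply, h, h'.1, h'.2]
      · have h' := h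
        rw [Set.mem_Ioo, not_and_or] at h'
        rcases h' with h' | h' <;> simp [hD, Set.indicator_apply, h, h']
    simp_rw [he]
    rw [lintegral_indicator measurableSet_Ioo]
  rw [hRHS]
  refine lintegral_mono fun z => ?_
  have hmabs : Measurable fun ξ : ℝ =>
      |(w z (Set.Ioi ξ)).toReal - (if ξ < u z then (1:ℝ) else 0)| :=
    ((meas_toReal_Ioi (w z)).sub
      (Measurable.ite measurableSet_Iio measurable_const measurable_const)).abs
  have hint : Integrable (fun ξ => |(w z (Set.Ioi ξ)).toReal - (if ξ < u z then (1:ℝ) else 0)|)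
      (volume.restrict (Ioo (-R) R)) := by
    refine Integrable.mono' (integrable_const 1) hmabs.aestronglyMeasurable
      (ae_of_all _ fun ξ => ?_)
    rw [Real.norm_eq_abs, abs_abs]
    exact habs_le_one (z, ξ)
  calc ENNReal.ofReal |(∫ s, T R s ∂w z) - T R (u z)|
      ≤ ENNReal.ofReal (∫ ξ in Ioo (-R) R,
          |(w z (Set.Ioi ξ)).toReal - (if ξ < u z then (1:ℝ) else 0)|) := by
        apply ENNReal.ofReal_le_ofReal
        rw [bdiff_eq (w z) (u z) hR]
        simpa [Real.norm_eq_abs] using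
          norm_integral_le_integral_norm (μ := volume.restrict (Ioo (-R) R))
            (f := fun ξ => (w z (Set.Ioi ξ)).toReal - (if ξ < u z then (1:ℝ) else 0))
  _ = ∫⁻ ξ in Ioo (-R) R, ENNReal.ofReal
        |(w z (Set.Ioi ξ)).toReal - (if ξ < u z then (1:ℝ) else 0)| :=
      ofReal_integral_eq_lintegral_ofReal hint (ae_of_all _ fun ξ => abs_nonneg _)

lemma Mid {X : Type*} [MeasurableSpace X] (lam : Measure X) [IsFiniteMeasure lam]
    (w : X → Measure ℝ) (hprob : ∀ z, IsProbabilityMeasure (w z))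
    (u : X → ℝ) {q : ℝ} (hq1 : 1 ≤ q) {R : ℝ} (hR : 1 ≤ R) :
    ∫⁻ z, ENNReal.ofReal (|(∫ s, T R s ∂w z) - T R (u z)| ^ q) ∂lam
      ≤ ENNReal.ofReal ((2*R) ^ (q-1)) *
        ∫⁻ z, ENNReal.ofReal |(∫ s, T R s ∂w z) - T R (u z)| ∂lam := by
  have hpt : ∀ z, ENNReal.ofReal (|(∫ s, T R s ∂w z) - T R (u z)| ^ q)
      ≤ ENNReal.ofReal ((2*R) ^ (q-1)) * ENNReal.ofReal |(∫ s, T R s ∂w z) - T R (u z)| := by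
    intro z
    haveI := hprob z
    have h1 : |∫ s, T R s ∂w z| ≤ R := by
      have := norm_integral_le_of_norm_le_const (μ := w z) (f := T R) (C := R)
        (ae_of_all _ fun s => by
          rw [Real.norm_eq_abs]
          exact (abs_T_le R s).trans (le_of_eq (abs_of_nonneg (by linarith))))
      simpa [Real.norm_eq_abs, measure_univ] using this
    have h2 : |T R (u z)| ≤ R :=
      (abs_T_le R (u z)).trans (le_of_eq (abs_of_nonneg (by linarith)))
    have h3 : |(∫ s, T R s ∂w z) - T R (u z)| ≤ 2 * R := by
      calc |(∫ s, T R s ∂w z) - T R (u z)| ≤ |∫ s, T R s ∂w z| + |T R (u z)| := abs_sub _ _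
      _ ≤ 2 * R := by linarith
    calc ENNReal.ofReal (|(∫ s, T R s ∂w z) - T R (u z)| ^ q)
        ≤ ENNReal.ofReal ((2*R) ^ (q-1) * |(∫ s, T R s ∂w z) - T R (u z)|) :=
          ENNReal.ofReal_le_ofReal (rpow_le_mul_of_le (abs_nonneg _) h3 hq1)
    _ = ENNReal.ofReal ((2*R) ^ (q-1)) * ENNReal.ofReal |(∫ s, T R s ∂w z) - T R (u z)| :=
          ENNReal.ofReal_mul (by positivity)
  calc ∫⁻ z, ENNReal.ofReal (|(∫ s, T R s ∂w z) - T R (u z)| ^ q) ∂lam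
      ≤ ∫⁻ z, ENNReal.ofReal ((2*R) ^ (q-1)) *
          ENNReal.ofReal |(∫ s, T R s ∂w z) - T R (u z)| ∂lam := lintegral_mono hpt
  _ = ENNReal.ofReal ((2*R) ^ (q-1)) *
        ∫⁻ z, ENNReal.ofReal |(∫ s, T R s ∂w z) - T R (u z)| ∂lam :=
      lintegral_const_mul' _ _ ENNReal.ofReal_ne_top



-- (T defined above)
lemma integrable_id_of_moment (μ : Measure ℝ) [IsProbabilityMeasure μ] {p : ℝ} (hp : 1 ≤ p)
    (hfin : (∫⁻ s, ENNReal.ofReal (|s| ^ p) ∂μ) ≠ ⊤) :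
    Integrable (fun s : ℝ => s) μ := by
  refine ⟨measurable_id.aestronglyMeasurable, ?_⟩
  rw [hasFiniteIntegral_iff_norm]
  calc ∫⁻ s, ENNReal.ofReal ‖s‖ ∂μ ≤ ∫⁻ s, (1 + ENNReal.ofReal (|s| ^ p)) ∂μ := by
        refine lintegral_mono fun s => ?_
        rw [Real.norm_eq_abs]
        calc ENNReal.ofReal |s| ≤ ENNReal.ofReal (1 + |s| ^ p) :=
              ENNReal.ofReal_le_ofReal (abs_le_one_add_rpow hp)
        _ = 1 + ENNReal.ofReal (|s| ^ p) := by
              rw [ENNReal.ofReal_add zero_le_one (Real.rpow_nonneg (abs_nonneg s) p)]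
              simp
  _ = 1 + ∫⁻ s, ENNReal.ofReal (|s| ^ p) ∂μ := by
        rw [lintegral_add_left measurable_const, lintegral_const, measure_univ, mul_one]
  _ < ⊤ := by
        rw [ENNReal.add_lt_top]
        exact ⟨ENNReal.one_lt_top, lt_top_iff_ne_top.mpr hfin⟩

lemma T1pt (μ : Measure ℝ) [IsProbabilityMeasure μ] {p q R : ℝ}
    (hp : 1 < p) (hq1 : 1 ≤ q) (hqp : q ≤ p) (hR : 1 ≤ R) :
    ENNReal.ofReal (|(∫ s, s ∂μ) - (∫ s, T R s ∂μ)| ^ q)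
      ≤ ENNReal.ofReal (R ^ (q - p)) * ∫⁻ s, ENNReal.ofReal (|s| ^ p) ∂μ := by
  have hq0 : (0:ℝ) ≤ q := by linarith
  by_cases hfin : (∫⁻ s, ENNReal.ofReal (|s| ^ p) ∂μ) = ⊤
  · rw [hfin, ENNReal.mul_top (by
      simp only [ne_eq, ENNReal.ofReal_eq_zero, not_le]
      exact Real.rpow_pos_of_pos (by linarith) _)]
    exact le_top
  · have hid := integrable_id_of_moment μ hp.le hfin
    have hd : (∫ s, s ∂μ) - (∫ s, T R s ∂μ) = ∫ s, (s - T R s) ∂μ :=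
      (integral_sub hid (integrable_T μ R)).symm
    have hmax_cont : Continuous fun s : ℝ => max (|s| - R) 0 :=
      (continuous_abs.sub continuous_const).max continuous_const
    have hmax_int : Integrable (fun s => max (|s| - R) 0) μ := by
      refine Integrable.mono' hid.abs hmax_cont.aestronglyMeasurable (ae_of_all _ fun s => ?_)
      rw [Real.norm_eq_abs, abs_of_nonneg (le_max_right _ _)]
      exact max_le (by simp [abs_nonneg]; linarith [abs_nonneg s]) (abs_nonneg s)
    have habs : |(∫ s, s ∂μ) - (∫ s, T R s ∂μ)| ≤ ∫ s, max (|s| - R) 0 ∂μ := by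
      rw [hd]
      calc |∫ s, (s - T R s) ∂μ| ≤ ∫ s, |s - T R s| ∂μ := by
            simpa [Real.norm_eq_abs] using
              norm_integral_le_integral_norm (μ := μ) (f := fun s => s - T R s)
      _ = ∫ s, max (|s| - R) 0 ∂μ :=
            integral_congr_ae (ae_of_all _ fun s => abs_sub_T R s (by linarith))
    calc ENNReal.ofReal (|(∫ s, s ∂μ) - (∫ s, T R s ∂μ)| ^ q)
        ≤ ENNReal.ofReal ((∫ s, max (|s| - R) 0 ∂μ) ^ q) :=
          ENNReal.ofReal_le_ofReal (Real.rpow_le_rpow (abs_nonneg _) habs hq0)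
    _ = (ENNReal.ofReal (∫ s, max (|s| - R) 0 ∂μ)) ^ q :=
          (ENNReal.ofReal_rpow_of_nonneg (integral_nonneg fun s => le_max_right _ _) hq0).symm
    _ = (∫⁻ s, ENNReal.ofReal (max (|s| - R) 0) ∂μ) ^ q := by
          rw [ofReal_integral_eq_lintegral_ofReal hmax_int
            (ae_of_all _ fun s => le_max_right _ _)]
    _ ≤ ∫⁻ s, (ENNReal.ofReal (max (|s| - R) 0)) ^ q ∂μ :=
          jensen_rpow (hmax_cont.measurable.ennreal_ofReal.aemeasurable) hq1
    _ = ∫⁻ s, ENNReal.ofReal ((max (|s| - R) 0) ^ q) ∂μ :=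
          lintegral_congr fun s => ENNReal.ofReal_rpow_of_nonneg (le_max_right _ _) hq0
    _ ≤ ∫⁻ s, ENNReal.ofReal (R ^ (q - p) * |s| ^ p) ∂μ :=
          lintegral_mono fun s => ENNReal.ofReal_le_ofReal (max_sub_rpow_le hR hq1 hqp)
    _ = ENNReal.ofReal (R ^ (q - p)) * ∫⁻ s, ENNReal.ofReal (|s| ^ p) ∂μ := by
          simp_rw [ENNReal.ofReal_mul (Real.rpow_nonneg (by linarith : (0:ℝ) ≤ R) _)]
          exact lintegral_const_mul' _ _ ENNReal.ofReal_ne_top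

lemma bq_pt (μ : Measure ℝ) [IsProbabilityMeasure μ] {p q R : ℝ}
    (hp : 1 < p) (hq1 : 1 ≤ q) (hqp : q ≤ p) (hR : 0 ≤ R) :
    ENNReal.ofReal (|∫ s, T R s ∂μ| ^ q) ≤ 1 + ∫⁻ s, ENNReal.ofReal (|s| ^ p) ∂μ := by
  have hq0 : (0:ℝ) ≤ q := by linarith
  by_cases hfin : (∫⁻ s, ENNReal.ofReal (|s| ^ p) ∂μ) = ⊤
  · rw [hfin]
    simp
  · have hid := integrable_id_of_moment μ hp.le hfin
    have habs : |∫ s, T R s ∂μ| ≤ ∫ s, |s| ∂μ := by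
      calc |∫ s, T R s ∂μ| ≤ ∫ s, |T R s| ∂μ := by
            simpa [Real.norm_eq_abs] using
              norm_integral_le_integral_norm (μ := μ) (f := T R)
      _ ≤ ∫ s, |s| ∂μ :=
            integral_mono (integrable_T μ R).abs hid.abs fun s => abs_T_le_abs R s hR
    calc ENNReal.ofReal (|∫ s, T R s ∂μ| ^ q)
        ≤ ENNReal.ofReal ((∫ s, |s| ∂μ) ^ q) :=
          ENNReal.ofReal_le_ofReal (Real.rpow_le_rpow (abs_nonneg _) habs hq0)
    _ = (ENNReal.ofReal (∫ s, |s| ∂μ)) ^ q :=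
          (ENNReal.ofReal_rpow_of_nonneg (integral_nonneg fun s => abs_nonneg s) hq0).symm
    _ = (∫⁻ s, ENNReal.ofReal |s| ∂μ) ^ q := by
          rw [ofReal_integral_eq_lintegral_ofReal hid.abs
            (ae_of_all _ fun s => abs_nonneg s)]
    _ ≤ ∫⁻ s, (ENNReal.ofReal |s|) ^ q ∂μ :=
          jensen_rpow (continuous_abs.measurable.ennreal_ofReal.aemeasurable) hq1
    _ = ∫⁻ s, ENNReal.ofReal (|s| ^ q) ∂μ :=
          lintegral_congr fun s => ENNReal.ofReal_rpow_of_nonneg (abs_nonneg s) hq0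
    _ ≤ ∫⁻ s, (1 + ENNReal.ofReal (|s| ^ p)) ∂μ := by
          refine lintegral_mono fun s => ?_
          calc ENNReal.ofReal (|s| ^ q) ≤ ENNReal.ofReal (1 + |s| ^ p) :=
                ENNReal.ofReal_le_ofReal (rpow_le_one_add_rpow hq0 hqp)
          _ = 1 + ENNReal.ofReal (|s| ^ p) := by
                rw [ENNReal.ofReal_add zero_le_one (Real.rpow_nonneg (abs_nonneg s) p)]
                simp
    _ = 1 + ∫⁻ s, ENNReal.ofReal (|s| ^ p) ∂μ := by
          rw [lintegral_add_left measurable_const, lintegral_const, measure_univ, mul_one]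



lemma tendstoA {X : Type*} [MeasurableSpace X] (lam : Measure X) [IsFiniteMeasure lam]
    (ν : ℕ → X → Measure ℝ) (hprob : ∀ n z, IsProbabilityMeasure (ν n z))
    (hGm : ∀ n, Measurable fun zξ : X × ℝ => ν n zξ.1 (Set.Ioi zξ.2))
    (u : X → ℝ) (hu : Measurable u)
    (hweak : ∀ g : X × ℝ → ℝ, Integrable g (lam.prod volume) →
      Tendsto
        (fun n => ∫ zξ : X × ℝ, (ν n zξ.1 (Set.Ioi zξ.2)).toReal * g zξ ∂(lam.prod volume))
        atTop
        (nhds (∫ zξ : X × ℝ, (if zξ.2 < u zξ.1 then (1:ℝ) else 0) * g zξ ∂(lam.prod volume))))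
    (R : ℝ) :
    Tendsto (fun n => ∫ zξ : X × ℝ,
        |(ν n zξ.1 (Set.Ioi zξ.2)).toReal - (if zξ.2 < u zξ.1 then (1:ℝ) else 0)|
          * (if zξ.2 ∈ Set.Ioo (-R) R then (1:ℝ) else 0) ∂(lam.prod volume))
      atTop (nhds 0) := by
  have hg0m : Measurable fun zξ : X × ℝ => (if zξ.2 ∈ Set.Ioo (-R) R then (1:ℝ) else 0) :=
    Measurable.ite (measurable_snd measurableSet_Ioo) measurable_const measurable_const
  have hχm : Measurable fun zξ : X × ℝ => (if zξ.2 < u zξ.1 then (1:ℝ) else 0) :=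
    Measurable.ite (measurableSet_lt measurable_snd (hu.comp measurable_fst)) measurable_const
      measurable_const
  have hg0nn : ∀ zξ : X × ℝ, 0 ≤ (if zξ.2 ∈ Set.Ioo (-R) R then (1:ℝ) else 0) := by
    intro zξ; split <;> norm_num
  have hg0int : Integrable (fun zξ : X × ℝ => (if zξ.2 ∈ Set.Ioo (-R) R then (1:ℝ) else 0))
      (lam.prod volume) := by
    have he : (fun zξ : X × ℝ => (if zξ.2 ∈ Set.Ioo (-R) R then (1:ℝ) else 0))
        = Set.indicator (Prod.snd ⁻¹' Set.Ioo (-R) R) (fun _ => (1:ℝ)) := by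
      ext zξ
      by_cases h : zξ.2 ∈ Set.Ioo (-R) R <;> simp [Set.indicator_apply, h]
    rw [he, integrable_indicator_iff (measurable_snd measurableSet_Ioo)]
    refine (integrableOn_const_iff (C := (1:ℝ))).2 (Or.inr ?_)
    rw [← Set.univ_prod, Measure.prod_prod, Real.volume_Ioo]
    exact ENNReal.mul_lt_top (measure_lt_top lam _) ENNReal.ofReal_lt_top
  -- an integrability criterion
  have hbd : ∀ h : X × ℝ → ℝ, Measurable h →
      (∀ zξ, |h zξ| ≤ (if zξ.2 ∈ Set.Ioo (-R) R then (1:ℝ) else 0)) →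
      Integrable h (lam.prod volume) := by
    intro h hm hle
    refine Integrable.mono' hg0int hm.aestronglyMeasurable (ae_of_all _ fun zξ => ?_)
    simpa [Real.norm_eq_abs] using hle zξ
  have hGnn : ∀ (n : ℕ) (zξ : X × ℝ), 0 ≤ (ν n zξ.1 (Set.Ioi zξ.2)).toReal := fun n zξ =>
    ENNReal.toReal_nonneg
  have hGle1 : ∀ (n : ℕ) (zξ : X × ℝ), (ν n zξ.1 (Set.Ioi zξ.2)).toReal ≤ 1 := by
    intro n zξ
    haveI := hprob n zξ.1
    exact ENNReal.toReal_le_of_le_ofReal zero_le_one (by simpa using prob_le_one)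
  have hg1int : Integrable (fun zξ : X × ℝ =>
      (if zξ.2 < u zξ.1 then (1:ℝ) else 0) * (if zξ.2 ∈ Set.Ioo (-R) R then (1:ℝ) else 0))
      (lam.prod volume) := by
    refine hbd _ (hχm.mul hg0m) fun zξ => ?_
    by_cases h : zξ.2 < u zξ.1 <;> by_cases h2 : zξ.2 ∈ Set.Ioo (-R) R <;> simp [h, h2]
  have h0 := hweak _ hg0int
  have h1 := hweak _ hg1int
  -- rewrite limit of h1
  have hlim1 : (∫ zξ : X × ℝ, (if zξ.2 < u zξ.1 then (1:ℝ) else 0) *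
      ((if zξ.2 < u zξ.1 then (1:ℝ) else 0) * (if zξ.2 ∈ Set.Ioo (-R) R then (1:ℝ) else 0))
        ∂(lam.prod volume))
      = ∫ zξ : X × ℝ, (if zξ.2 < u zξ.1 then (1:ℝ) else 0) *
          (if zξ.2 ∈ Set.Ioo (-R) R then (1:ℝ) else 0) ∂(lam.prod volume) := by
    refine integral_congr_ae (ae_of_all _ fun zξ => ?_)
    by_cases h : zξ.2 < u zξ.1 <;> simp [h]
  rw [hlim1] at h1
  -- pointwise splitting
  have hsplit : ∀ n, (fun zξ : X × ℝ =>
      |(ν n zξ.1 (Set.Ioi zξ.2)).toReal - (if zξ.2 < u zξ.1 then (1:ℝ) else 0)|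
        * (if zξ.2 ∈ Set.Ioo (-R) R then (1:ℝ) else 0))
      = fun zξ : X × ℝ =>
        ((ν n zξ.1 (Set.Ioi zξ.2)).toReal * (if zξ.2 ∈ Set.Ioo (-R) R then (1:ℝ) else 0)
        + (if zξ.2 < u zξ.1 then (1:ℝ) else 0) * (if zξ.2 ∈ Set.Ioo (-R) R then (1:ℝ) else 0))
        - 2 * ((ν n zξ.1 (Set.Ioi zξ.2)).toReal *
            ((if zξ.2 < u zξ.1 then (1:ℝ) else 0) * (if zξ.2 ∈ Set.Ioo (-R) R then (1:ℝ) else 0))) := by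
    intro n
    ext zξ
    have h01 := hGnn n zξ
    have h11 := hGle1 n zξ
    by_cases h : zξ.2 < u zξ.1
    · by_cases h2 : zξ.2 ∈ Set.Ioo (-R) R
      · simp only [h, h2, if_true]
        rw [abs_of_nonpos (by linarith)]
        ring
      · simp [h, h2]
    · by_cases h2 : zξ.2 ∈ Set.Ioo (-R) R
      · simp only [h, h2, if_true, if_false]
        rw [sub_zero, abs_of_nonneg h01]
        ring
      · simp [h, h2]
  have hGg0int : ∀ n, Integrable (fun zξ : X × ℝ =>
      (ν n zξ.1 (Set.Ioi zξ.2)).toReal * (if zξ.2 ∈ Set.Ioo (-R) R then (1:ℝ) else 0))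
      (lam.prod volume) := by
    intro n
    refine hbd _ (((hGm n).ennreal_toReal).mul hg0m) fun zξ => ?_
    rw [abs_mul, abs_of_nonneg (hGnn n zξ), abs_of_nonneg (hg0nn zξ)]
    calc (ν n zξ.1 (Set.Ioi zξ.2)).toReal * (if zξ.2 ∈ Set.Ioo (-R) R then (1:ℝ) else 0)
        ≤ 1 * (if zξ.2 ∈ Set.Ioo (-R) R then (1:ℝ) else 0) :=
          mul_le_mul_of_nonneg_right (hGle1 n zξ) (hg0nn zξ)
    _ = _ := one_mul _
  have hGg1int : ∀ n, Integrable (fun zξ : X × ℝ =>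
      (ν n zξ.1 (Set.Ioi zξ.2)).toReal *
        ((if zξ.2 < u zξ.1 then (1:ℝ) else 0) * (if zξ.2 ∈ Set.Ioo (-R) R then (1:ℝ) else 0)))
      (lam.prod volume) := by
    intro n
    refine hbd _ (((hGm n).ennreal_toReal).mul (hχm.mul hg0m)) fun zξ => ?_
    have h01 := hGnn n zξ
    have h11 := hGle1 n zξ
    by_cases h : zξ.2 < u zξ.1 <;> by_cases h2 : zξ.2 ∈ Set.Ioo (-R) R <;>
      simp [h, h2, abs_of_nonneg, h01, h11]
  have hrepr : ∀ n, (∫ zξ : X × ℝ,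
      |(ν n zξ.1 (Set.Ioi zξ.2)).toReal - (if zξ.2 < u zξ.1 then (1:ℝ) else 0)|
        * (if zξ.2 ∈ Set.Ioo (-R) R then (1:ℝ) else 0) ∂(lam.prod volume))
      = ((∫ zξ : X × ℝ, (ν n zξ.1 (Set.Ioi zξ.2)).toReal *
            (if zξ.2 ∈ Set.Ioo (-R) R then (1:ℝ) else 0) ∂(lam.prod volume))
        + (∫ zξ : X × ℝ, (if zξ.2 < u zξ.1 then (1:ℝ) else 0) *
            (if zξ.2 ∈ Set.Ioo (-R) R then (1:ℝ) else 0) ∂(lam.prod volume)))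
        - 2 * (∫ zξ : X × ℝ, (ν n zξ.1 (Set.Ioi zξ.2)).toReal *
            ((if zξ.2 < u zξ.1 then (1:ℝ) else 0) * (if zξ.2 ∈ Set.Ioo (-R) R then (1:ℝ) else 0))
            ∂(lam.prod volume)) := by
    intro n
    have hsum : Integrable (fun zξ : X × ℝ =>
        (ν n zξ.1 (Set.Ioi zξ.2)).toReal * (if zξ.2 ∈ Set.Ioo (-R) R then (1:ℝ) else 0)
        + (if zξ.2 < u zξ.1 then (1:ℝ) else 0) * (if zξ.2 ∈ Set.Ioo (-R) R then (1:ℝ) else 0))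
        (lam.prod volume) := (hGg0int n).add hg1int
    have h2c : Integrable (fun zξ : X × ℝ => 2 * ((ν n zξ.1 (Set.Ioi zξ.2)).toReal *
        ((if zξ.2 < u zξ.1 then (1:ℝ) else 0) * (if zξ.2 ∈ Set.Ioo (-R) R then (1:ℝ) else 0))))
        (lam.prod volume) := (hGg1int n).const_mul 2
    rw [hsplit n, integral_sub hsum h2c, integral_add (hGg0int n) hg1int,
      integral_const_mul]
  simp only [hrepr]
  have hconst : Tendsto (fun _ : ℕ => ∫ zξ : X × ℝ, (if zξ.2 < u zξ.1 then (1:ℝ) else 0) *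
      (if zξ.2 ∈ Set.Ioo (-R) R then (1:ℝ) else 0) ∂(lam.prod volume)) atTop
      (nhds (∫ zξ : X × ℝ, (if zξ.2 < u zξ.1 then (1:ℝ) else 0) *
        (if zξ.2 ∈ Set.Ioo (-R) R then (1:ℝ) else 0) ∂(lam.prod volume))) := tendsto_const_nhds
  have htend := ((h0.add hconst).sub (h1.const_mul 2))
  have : ((∫ zξ : X × ℝ, (if zξ.2 < u zξ.1 then (1:ℝ) else 0) *
      (if zξ.2 ∈ Set.Ioo (-R) R then (1:ℝ) else 0) ∂(lam.prod volume))
      + (∫ zξ : X × ℝ, (if zξ.2 < u zξ.1 then (1:ℝ) else 0) *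
          (if zξ.2 ∈ Set.Ioo (-R) R then (1:ℝ) else 0) ∂(lam.prod volume)))
      - 2 * (∫ zξ : X × ℝ, (if zξ.2 < u zξ.1 then (1:ℝ) else 0) *
          (if zξ.2 ∈ Set.Ioo (-R) R then (1:ℝ) else 0) ∂(lam.prod volume)) = 0 := by ring
  rw [this] at htend
  exact htend


end Lem213
namespace Lem213
lemma T_eq {R s : ℝ} (h : |s| ≤ R) : T R s = s := by
  unfold T
  rw [min_eq_left ((le_abs_self s).trans h),
    max_eq_left (by linarith [neg_abs_le s] : -R ≤ s)]
end Lem213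

open Lem213
open scoped ENNReal

/-- **Convergence to an equilibrium (Lemma 2.13).** Let `(X, A, λ)` be a finite measure
space and `p > 1`. Let `(ν n z)` be Young measures on `X` (measurable families of Borel
probability measures on `ℝ`) with a uniform `p`-moment bound. Set
`f n (z, ξ) = ν n z (Ioi ξ)`. If `f n` converges, in `L^∞(X × ℝ)` weak-*, to the
equilibrium kinetic function `1_{u z > ξ}` for a measurable `u : X → ℝ`, then for every
`1 ≤ q < p`, the barycenters `u_n z = ∫ ξ dν n z (ξ)` converge to `u` in `L^q(X, λ)`. -/
theorem stmt1 {X : Type*} [MeasurableSpace X] (lam : Measure X) [IsFiniteMeasure lam]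
    (p : ℝ) (hp : 1 < p)
    (ν : ℕ → X → Measure ℝ)
    (hprob : ∀ n z, IsProbabilityMeasure (ν n z))
    (hker : ∀ n, ∀ B : Set ℝ, MeasurableSet B → Measurable fun z => ν n z B)
    (C : ENNReal) (hC : C < ⊤)
    (hmom : ∀ n, ∫⁻ z, ∫⁻ ξ, ENNReal.ofReal (|ξ| ^ p) ∂(ν n z) ∂lam ≤ C)
    (u : X → ℝ) (hu : Measurable u)
    (hweak : ∀ g : X × ℝ → ℝ, Integrable g (lam.prod volume) →
      Tendsto
        (fun n => ∫ zξ : X × ℝ, (ν n zξ.1 (Set.Ioi zξ.2)).toReal * g zξ ∂(lam.prod volume))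
        atTop
        (nhds (∫ zξ : X × ℝ, (if zξ.2 < u zξ.1 then (1:ℝ) else 0) * g zξ ∂(lam.prod volume))))
    (q : ℝ) (hq1 : 1 ≤ q) (hqp : q < p) :
    Tendsto (fun n => ∫ z, |(∫ ξ, ξ ∂(ν n z)) - u z| ^ q ∂lam) atTop (nhds 0) := by
  have hq0 : (0:ℝ) < q := by linarith
  -- measurability of the kernels
  have hνm : ∀ n, Measurable (ν n) := fun n =>
    Measure.measurable_of_measurable_coe _ (hker n)
  have hGm : ∀ n, Measurable fun zξ : X × ℝ => ν n zξ.1 (Set.Ioi zξ.2) := by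
    intro n
    set κ : ProbabilityTheory.Kernel X ℝ := ⟨ν n, hνm n⟩ with hκ
    haveI : ProbabilityTheory.IsMarkovKernel κ := ⟨fun z => hprob n z⟩
    set κ' := κ.comap Prod.fst (measurable_fst : Measurable fun zξ : X × ℝ => zξ.1) with hκ'
    have ht : MeasurableSet {pq : (X × ℝ) × ℝ | pq.1.2 < pq.2} :=
      measurableSet_lt (measurable_fst.snd) measurable_snd
    have h := ProbabilityTheory.Kernel.measurable_kernel_prodMk_left (κ := κ') ht
    have he : ∀ zξ : X × ℝ, κ' zξ (Prod.mk zξ ⁻¹' {pq : (X × ℝ) × ℝ | pq.1.2 < pq.2})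
        = ν n zξ.1 (Set.Ioi zξ.2) := by
      intro zξ
      rw [hκ', ProbabilityTheory.Kernel.comap_apply]
      rfl
    simpa only [he] using h
  have hbm : ∀ n (R : ℝ), Measurable fun z => ∫ s, T R s ∂ν n z := by
    intro n R
    set κ : ProbabilityTheory.Kernel X ℝ := ⟨ν n, hνm n⟩ with hκ
    haveI : ProbabilityTheory.IsMarkovKernel κ := ⟨fun z => hprob n z⟩
    have hsm : StronglyMeasurable fun zs : X × ℝ => T R zs.2 :=
      ((T_cont R).measurable.comp measurable_snd).stronglyMeasurable
    exact (hsm.integral_kernel_prod_right' (κ := κ)).measurable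
  have hunm : ∀ n, Measurable fun z => ∫ ξ, ξ ∂ν n z := by
    intro n
    set κ : ProbabilityTheory.Kernel X ℝ := ⟨ν n, hνm n⟩ with hκ
    haveI : ProbabilityTheory.IsMarkovKernel κ := ⟨fun z => hprob n z⟩
    have hsm : StronglyMeasurable fun zs : X × ℝ => zs.2 :=
      measurable_snd.stronglyMeasurable
    exact (hsm.integral_kernel_prod_right' (κ := κ)).measurable
  -- the weak convergence quantity
  set A : ℕ → ℝ → ℝ := fun n R => ∫ zξ : X × ℝ,
      |(ν n zξ.1 (Set.Ioi zξ.2)).toReal - (if zξ.2 < u zξ.1 then (1:ℝ) else 0)|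
        * (if zξ.2 ∈ Set.Ioo (-R) R then (1:ℝ) else 0) ∂(lam.prod volume) with hA
  have hW : ∀ R : ℝ, Tendsto (fun n => A n R) atTop (nhds 0) := fun R =>
    tendstoA lam ν hprob hGm u hu hweak R
  -- term bounds
  have hMidlam : ∀ (n : ℕ) (R : ℝ), 1 ≤ R →
      ∫⁻ z, ENNReal.ofReal (|(∫ s, T R s ∂ν n z) - T R (u z)| ^ q) ∂lam
        ≤ ENNReal.ofReal ((2*R) ^ (q-1)) * ENNReal.ofReal (A n R) := by
    intro n R hR
    refine (Mid lam (ν n) (hprob n) u hq1 hR).trans ?_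
    exact mul_le_mul_right (E1 lam (ν n) (hprob n) (hGm n) u hu (by linarith)) _
  have hT1lam : ∀ (n : ℕ) (R : ℝ), 1 ≤ R →
      ∫⁻ z, ENNReal.ofReal (|(∫ ξ, ξ ∂ν n z) - (∫ s, T R s ∂ν n z)| ^ q) ∂lam
        ≤ ENNReal.ofReal (R ^ (q - p)) * C := by
    intro n R hR
    calc ∫⁻ z, ENNReal.ofReal (|(∫ ξ, ξ ∂ν n z) - (∫ s, T R s ∂ν n z)| ^ q) ∂lam
        ≤ ∫⁻ z, ENNReal.ofReal (R ^ (q - p)) * (∫⁻ s, ENNReal.ofReal (|s| ^ p) ∂ν n z) ∂lam := by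
          refine lintegral_mono fun z => ?_
          haveI := hprob n z
          exact T1pt (ν n z) hp hq1 hqp.le hR
    _ = ENNReal.ofReal (R ^ (q - p)) * ∫⁻ z, (∫⁻ s, ENNReal.ofReal (|s| ^ p) ∂ν n z) ∂lam :=
          lintegral_const_mul' _ _ ENNReal.ofReal_ne_top
    _ ≤ ENNReal.ofReal (R ^ (q - p)) * C := mul_le_mul_right (hmom n) _
  have hbKlam : ∀ (n : ℕ) (R : ℝ), 0 ≤ R →
      ∫⁻ z, ENNReal.ofReal (|∫ s, T R s ∂ν n z| ^ q) ∂lam ≤ lam Set.univ + C := by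
    intro n R hR
    calc ∫⁻ z, ENNReal.ofReal (|∫ s, T R s ∂ν n z| ^ q) ∂lam
        ≤ ∫⁻ z, (1 + ∫⁻ s, ENNReal.ofReal (|s| ^ p) ∂ν n z) ∂lam := by
          refine lintegral_mono fun z => ?_
          haveI := hprob n z
          exact bq_pt (ν n z) hp hq1 hqp.le hR
    _ = lam Set.univ + ∫⁻ z, (∫⁻ s, ENNReal.ofReal (|s| ^ p) ∂ν n z) ∂lam := by
          rw [lintegral_add_left measurable_const, lintegral_one]
    _ ≤ lam Set.univ + C := add_le_add le_rfl (hmom n)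
  have h2ne : ((2:ℝ≥0∞) ^ (q-1)) ≠ ⊤ :=
    ENNReal.rpow_ne_top_of_nonneg (by linarith) (by norm_num)
  -- uniform bound on truncations of u
  have hTu : ∀ R : ℝ, 1 ≤ R →
      ∫⁻ z, ENNReal.ofReal (|T R (u z)| ^ q) ∂lam ≤ 2 ^ (q-1) * (lam Set.univ + C) := by
    intro R hR
    have hpt : ∀ (n : ℕ) (z : X), ENNReal.ofReal (|T R (u z)| ^ q)
        ≤ 2 ^ (q-1) * (ENNReal.ofReal (|∫ s, T R s ∂ν n z| ^ q)
            + ENNReal.ofReal (|(∫ s, T R s ∂ν n z) - T R (u z)| ^ q)) := by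
      intro n z
      have h1 : |T R (u z)| ≤ |∫ s, T R s ∂ν n z| + |(∫ s, T R s ∂ν n z) - T R (u z)| := by
        have h' := abs_add_le ((∫ s, T R s ∂ν n z)) (-((∫ s, T R s ∂ν n z) - T R (u z)))
        rw [abs_neg] at h'
        have e2 : |T R (u z)|
            = |(∫ s, T R s ∂ν n z) + -((∫ s, T R s ∂ν n z) - T R (u z))| := by
          rw [show (∫ s, T R s ∂ν n z) + -((∫ s, T R s ∂ν n z) - T R (u z)) = T R (u z)
            from by ring]
        rw [e2]
        exact h'
      calc ENNReal.ofReal (|T R (u z)| ^ q)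
          = (ENNReal.ofReal |T R (u z)|) ^ q :=
            (ENNReal.ofReal_rpow_of_nonneg (abs_nonneg _) hq0.le).symm
      _ ≤ (ENNReal.ofReal (|∫ s, T R s ∂ν n z| + |(∫ s, T R s ∂ν n z) - T R (u z)|)) ^ q :=
            ENNReal.rpow_le_rpow (ENNReal.ofReal_le_ofReal h1) hq0.le
      _ = (ENNReal.ofReal |∫ s, T R s ∂ν n z|
            + ENNReal.ofReal |(∫ s, T R s ∂ν n z) - T R (u z)|) ^ q := by
            rw [ENNReal.ofReal_add (abs_nonneg _) (abs_nonneg _)]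
      _ ≤ 2 ^ (q-1) * ((ENNReal.ofReal |∫ s, T R s ∂ν n z|) ^ q
            + (ENNReal.ofReal |(∫ s, T R s ∂ν n z) - T R (u z)|) ^ q) :=
            ENNReal.rpow_add_le_mul_rpow_add_rpow _ _ hq1
      _ = 2 ^ (q-1) * (ENNReal.ofReal (|∫ s, T R s ∂ν n z| ^ q)
            + ENNReal.ofReal (|(∫ s, T R s ∂ν n z) - T R (u z)| ^ q)) := by
            rw [ENNReal.ofReal_rpow_of_nonneg (abs_nonneg _) hq0.le,
              ENNReal.ofReal_rpow_of_nonneg (abs_nonneg _) hq0.le]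
    have hm1 : ∀ n, Measurable fun z => ENNReal.ofReal (|∫ s, T R s ∂ν n z| ^ q) := fun n =>
      ((Real.continuous_rpow_const hq0.le).measurable.comp (hbm n R).abs).ennreal_ofReal
    have hn : ∀ n, ∫⁻ z, ENNReal.ofReal (|T R (u z)| ^ q) ∂lam
        ≤ 2 ^ (q-1) * ((lam Set.univ + C)
            + ENNReal.ofReal ((2*R) ^ (q-1)) * ENNReal.ofReal (A n R)) := by
      intro n
      calc ∫⁻ z, ENNReal.ofReal (|T R (u z)| ^ q) ∂lam
          ≤ ∫⁻ z, 2 ^ (q-1) * (ENNReal.ofReal (|∫ s, T R s ∂ν n z| ^ q)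
              + ENNReal.ofReal (|(∫ s, T R s ∂ν n z) - T R (u z)| ^ q)) ∂lam :=
            lintegral_mono (hpt n)
      _ = 2 ^ (q-1) * ∫⁻ z, (ENNReal.ofReal (|∫ s, T R s ∂ν n z| ^ q)
              + ENNReal.ofReal (|(∫ s, T R s ∂ν n z) - T R (u z)| ^ q)) ∂lam :=
            lintegral_const_mul' _ _ h2ne
      _ = 2 ^ (q-1) * ((∫⁻ z, ENNReal.ofReal (|∫ s, T R s ∂ν n z| ^ q) ∂lam)
              + ∫⁻ z, ENNReal.ofReal (|(∫ s, T R s ∂ν n z) - T R (u z)| ^ q) ∂lam) := by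
            rw [lintegral_add_left (hm1 n)]
      _ ≤ 2 ^ (q-1) * ((lam Set.univ + C)
              + ENNReal.ofReal ((2*R) ^ (q-1)) * ENNReal.ofReal (A n R)) :=
            mul_le_mul_right (add_le_add (hbKlam n R (by linarith)) (hMidlam n R hR)) _
    have hofA : Tendsto (fun n => ENNReal.ofReal (A n R)) atTop (nhds 0) := by
      have := ENNReal.tendsto_ofReal (hW R)
      rwa [ENNReal.ofReal_zero] at this
    have hlim : Tendsto (fun n => 2 ^ (q-1) * ((lam Set.univ + C)
        + ENNReal.ofReal ((2*R) ^ (q-1)) * ENNReal.ofReal (A n R))) atTop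
        (nhds (2 ^ (q-1) * (lam Set.univ + C))) := by
      have h1 : Tendsto (fun n => ENNReal.ofReal ((2*R) ^ (q-1)) * ENNReal.ofReal (A n R))
          atTop (nhds 0) := by
        have := ENNReal.Tendsto.const_mul (a := ENNReal.ofReal ((2*R) ^ (q-1))) hofA
          (Or.inr ENNReal.ofReal_ne_top)
        simpa using this
      have h2 : Tendsto (fun n => (lam Set.univ + C)
          + ENNReal.ofReal ((2*R) ^ (q-1)) * ENNReal.ofReal (A n R)) atTop
          (nhds (lam Set.univ + C)) := by
        have := h1.const_add (lam Set.univ + C)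
        simpa using this
      have := ENNReal.Tendsto.const_mul (a := (2:ℝ≥0∞) ^ (q-1)) h2 (Or.inr h2ne)
      simpa using this
    exact ge_of_tendsto' hlim hn
  -- u is in L^q
  have humeas : ∀ R : ℝ, Measurable fun z => ENNReal.ofReal (|T R (u z)| ^ q) := fun R =>
    ((Real.continuous_rpow_const hq0.le).measurable.comp
      (((T_cont R).measurable.comp hu).abs)).ennreal_ofReal
  have hU : ∫⁻ z, ENNReal.ofReal (|u z| ^ q) ∂lam ≤ 2 ^ (q-1) * (lam Set.univ + C) := by
    have hpt : ∀ z, Tendsto (fun k : ℕ => ENNReal.ofReal (|T ((k:ℝ)+1) (u z)| ^ q)) atTop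
        (nhds (ENNReal.ofReal (|u z| ^ q))) := by
      intro z
      refine tendsto_const_nhds.congr' ?_
      filter_upwards [eventually_ge_atTop ⌈|u z|⌉₊] with k hk
      have : |u z| ≤ (k:ℝ) + 1 := by
        have h1 : |u z| ≤ (⌈|u z|⌉₊ : ℝ) := Nat.le_ceil _
        have h2 : ((⌈|u z|⌉₊ : ℕ) : ℝ) ≤ (k:ℝ) := Nat.cast_le.mpr hk
        linarith
      rw [T_eq this]
    have hlq : ∀ z, ENNReal.ofReal (|u z| ^ q)
        = Filter.liminf (fun k : ℕ => ENNReal.ofReal (|T ((k:ℝ)+1) (u z)| ^ q)) atTop :=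
      fun z => ((hpt z).liminf_eq).symm
    calc ∫⁻ z, ENNReal.ofReal (|u z| ^ q) ∂lam
        = ∫⁻ z, Filter.liminf (fun k : ℕ =>
            ENNReal.ofReal (|T ((k:ℝ)+1) (u z)| ^ q)) atTop ∂lam := lintegral_congr hlq
    _ ≤ Filter.liminf (fun k : ℕ =>
          ∫⁻ z, ENNReal.ofReal (|T ((k:ℝ)+1) (u z)| ^ q) ∂lam) atTop :=
        lintegral_liminf_le fun k => humeas _
    _ ≤ Filter.liminf (fun _ : ℕ => 2 ^ (q-1) * (lam Set.univ + C)) atTop :=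
        Filter.liminf_le_liminf (Eventually.of_forall fun k =>
          hTu ((k:ℝ)+1) (le_add_of_nonneg_left (Nat.cast_nonneg k)))
    _ = 2 ^ (q-1) * (lam Set.univ + C) := Filter.liminf_const _
  have hUfin : ∫⁻ z, ENNReal.ofReal (|u z| ^ q) ∂lam ≠ ⊤ := by
    refine ne_top_of_le_ne_top ?_ hU
    exact ENNReal.mul_ne_top h2ne (ENNReal.add_ne_top.mpr ⟨measure_ne_top lam _, hC.ne⟩)
  -- tail of u tends to zero
  have hT3 : Tendsto (fun k : ℕ =>
      ∫⁻ z, ENNReal.ofReal (|T ((k:ℝ)+1) (u z) - u z| ^ q) ∂lam) atTop (nhds 0) := by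
    have := tendsto_lintegral_of_dominated_convergence (μ := lam)
      (F := fun (k : ℕ) z => ENNReal.ofReal (|T ((k:ℝ)+1) (u z) - u z| ^ q))
      (f := fun _ => 0) (bound := fun z => ENNReal.ofReal (|u z| ^ q))
      (fun k => ((Real.continuous_rpow_const hq0.le).measurable.comp
        ((((T_cont _).measurable.comp hu).sub hu).abs)).ennreal_ofReal)
      (fun k => ae_of_all _ fun z => ?_) hUfin (ae_of_all _ fun z => ?_)
    · simpa using this
    · -- domination
      apply ENNReal.ofReal_le_ofReal
      refine Real.rpow_le_rpow (abs_nonneg _) ?_ hq0.le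
      rw [abs_sub_comm, abs_sub_T _ _ (by positivity)]
      refine max_le (by linarith [abs_nonneg (u z), (by positivity : (0:ℝ) ≤ (k:ℝ)+1)])
        (abs_nonneg _)
    · -- pointwise convergence
      refine tendsto_const_nhds.congr' ?_
      filter_upwards [eventually_ge_atTop ⌈|u z|⌉₊] with k hk
      have : |u z| ≤ (k:ℝ) + 1 := by
        have h1 : |u z| ≤ (⌈|u z|⌉₊ : ℝ) := Nat.le_ceil _
        have h2 : ((⌈|u z|⌉₊ : ℕ) : ℝ) ≤ (k:ℝ) := Nat.cast_le.mpr hk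
        linarith
      rw [T_eq this, sub_self, abs_zero, Real.zero_rpow hq0.ne', ENNReal.ofReal_zero]
  -- representation of the Bochner integral
  have hrepr : ∀ n, (∫ z, |(∫ ξ, ξ ∂ν n z) - u z| ^ q ∂lam)
      = (∫⁻ z, ENNReal.ofReal (|(∫ ξ, ξ ∂ν n z) - u z| ^ q) ∂lam).toReal := fun n =>
    integral_eq_lintegral_of_nonneg_ae (ae_of_all _ fun z => Real.rpow_nonneg (abs_nonneg _) q)
      (((Real.continuous_rpow_const hq0.le).measurable.comp
        ((hunm n).sub hu).abs).aestronglyMeasurable)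
  set D2 : ℝ≥0∞ := 2 ^ (q-1) * 2 ^ (q-1) with hD2
  have hD2ne : D2 ≠ ⊤ := ENNReal.mul_ne_top h2ne h2ne
  -- the master bound
  have hL : ∀ (R : ℝ), 1 ≤ R → ∀ n,
      (∫⁻ z, ENNReal.ofReal (|(∫ ξ, ξ ∂ν n z) - u z| ^ q) ∂lam)
        ≤ (D2 * (ENNReal.ofReal (R ^ (q - p)) * C)
            + D2 * (∫⁻ z, ENNReal.ofReal (|T R (u z) - u z| ^ q) ∂lam))
          + D2 * (ENNReal.ofReal ((2*R) ^ (q-1)) * ENNReal.ofReal (A n R)) := by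
    intro R hR n
    have hpt : ∀ z, ENNReal.ofReal (|(∫ ξ, ξ ∂ν n z) - u z| ^ q)
        ≤ D2 * (ENNReal.ofReal (|(∫ ξ, ξ ∂ν n z) - (∫ s, T R s ∂ν n z)| ^ q)
            + ENNReal.ofReal (|(∫ s, T R s ∂ν n z) - T R (u z)| ^ q)
            + ENNReal.ofReal (|T R (u z) - u z| ^ q)) := by
      intro z
      have htri : |(∫ ξ, ξ ∂ν n z) - u z| ≤ |(∫ ξ, ξ ∂ν n z) - (∫ s, T R s ∂ν n z)|
          + |(∫ s, T R s ∂ν n z) - T R (u z)| + |T R (u z) - u z| := by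
        have e : (∫ ξ, ξ ∂ν n z) - u z = ((∫ ξ, ξ ∂ν n z) - (∫ s, T R s ∂ν n z))
            + ((∫ s, T R s ∂ν n z) - T R (u z)) + (T R (u z) - u z) := by ring
        rw [e]
        exact abs_add_three _ _ _
      calc ENNReal.ofReal (|(∫ ξ, ξ ∂ν n z) - u z| ^ q)
          = (ENNReal.ofReal |(∫ ξ, ξ ∂ν n z) - u z|) ^ q :=
            (ENNReal.ofReal_rpow_of_nonneg (abs_nonneg _) hq0.le).symm
      _ ≤ (ENNReal.ofReal (|(∫ ξ, ξ ∂ν n z) - (∫ s, T R s ∂ν n z)|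
            + |(∫ s, T R s ∂ν n z) - T R (u z)| + |T R (u z) - u z|)) ^ q :=
            ENNReal.rpow_le_rpow (ENNReal.ofReal_le_ofReal htri) hq0.le
      _ = (ENNReal.ofReal |(∫ ξ, ξ ∂ν n z) - (∫ s, T R s ∂ν n z)|
            + ENNReal.ofReal |(∫ s, T R s ∂ν n z) - T R (u z)|
            + ENNReal.ofReal |T R (u z) - u z|) ^ q := by
            rw [ENNReal.ofReal_add (by positivity) (abs_nonneg _),
              ENNReal.ofReal_add (abs_nonneg _) (abs_nonneg _)]
      _ ≤ D2 * ((ENNReal.ofReal |(∫ ξ, ξ ∂ν n z) - (∫ s, T R s ∂ν n z)|) ^ q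
            + (ENNReal.ofReal |(∫ s, T R s ∂ν n z) - T R (u z)|) ^ q
            + (ENNReal.ofReal |T R (u z) - u z|) ^ q) := three_rpow _ _ _ hq1
      _ = D2 * (ENNReal.ofReal (|(∫ ξ, ξ ∂ν n z) - (∫ s, T R s ∂ν n z)| ^ q)
            + ENNReal.ofReal (|(∫ s, T R s ∂ν n z) - T R (u z)| ^ q)
            + ENNReal.ofReal (|T R (u z) - u z| ^ q)) := by
            rw [ENNReal.ofReal_rpow_of_nonneg (abs_nonneg _) hq0.le,
              ENNReal.ofReal_rpow_of_nonneg (abs_nonneg _) hq0.le,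
              ENNReal.ofReal_rpow_of_nonneg (abs_nonneg _) hq0.le]
    have hm1 : Measurable fun z =>
        ENNReal.ofReal (|(∫ ξ, ξ ∂ν n z) - (∫ s, T R s ∂ν n z)| ^ q) :=
      ((Real.continuous_rpow_const hq0.le).measurable.comp
        ((hunm n).sub (hbm n R)).abs).ennreal_ofReal
    have hm2 : Measurable fun z =>
        ENNReal.ofReal (|(∫ s, T R s ∂ν n z) - T R (u z)| ^ q) :=
      ((Real.continuous_rpow_const hq0.le).measurable.comp
        ((hbm n R).sub ((T_cont R).measurable.comp hu)).abs).ennreal_ofReal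
    calc (∫⁻ z, ENNReal.ofReal (|(∫ ξ, ξ ∂ν n z) - u z| ^ q) ∂lam)
        ≤ ∫⁻ z, D2 * (ENNReal.ofReal (|(∫ ξ, ξ ∂ν n z) - (∫ s, T R s ∂ν n z)| ^ q)
            + ENNReal.ofReal (|(∫ s, T R s ∂ν n z) - T R (u z)| ^ q)
            + ENNReal.ofReal (|T R (u z) - u z| ^ q)) ∂lam := lintegral_mono hpt
    _ = D2 * ∫⁻ z, (ENNReal.ofReal (|(∫ ξ, ξ ∂ν n z) - (∫ s, T R s ∂ν n z)| ^ q)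
            + ENNReal.ofReal (|(∫ s, T R s ∂ν n z) - T R (u z)| ^ q)
            + ENNReal.ofReal (|T R (u z) - u z| ^ q)) ∂lam :=
          lintegral_const_mul' _ _ hD2ne
    _ = D2 * ((∫⁻ z, ENNReal.ofReal (|(∫ ξ, ξ ∂ν n z) - (∫ s, T R s ∂ν n z)| ^ q) ∂lam)
            + (∫⁻ z, ENNReal.ofReal (|(∫ s, T R s ∂ν n z) - T R (u z)| ^ q) ∂lam)
            + (∫⁻ z, ENNReal.ofReal (|T R (u z) - u z| ^ q) ∂lam)) := by
          rw [lintegral_add_left (f := fun z => ENNReal.ofReal (|(∫ ξ, ξ ∂ν n z) - (∫ s, T R s ∂ν n z)| ^ q)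
              + ENNReal.ofReal (|(∫ s, T R s ∂ν n z) - T R (u z)| ^ q)) (hm1.add hm2),
              lintegral_add_left hm1]
    _ ≤ D2 * ((ENNReal.ofReal (R ^ (q - p)) * C)
            + (ENNReal.ofReal ((2*R) ^ (q-1)) * ENNReal.ofReal (A n R))
            + (∫⁻ z, ENNReal.ofReal (|T R (u z) - u z| ^ q) ∂lam)) :=
          mul_le_mul_right (add_le_add (add_le_add (hT1lam n R hR) (hMidlam n R hR))
            (le_refl _)) _
    _ = (D2 * (ENNReal.ofReal (R ^ (q - p)) * C)
            + D2 * (∫⁻ z, ENNReal.ofReal (|T R (u z) - u z| ^ q) ∂lam))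
          + D2 * (ENNReal.ofReal ((2*R) ^ (q-1)) * ENNReal.ofReal (A n R)) := by ring
  -- choose R so that the R-terms are small, then N for the middle term
  rw [Metric.tendsto_atTop]
  intro ε hε
  have hRlim : Tendsto (fun k : ℕ => D2 * (ENNReal.ofReal (((k:ℝ)+1) ^ (q - p)) * C)
      + D2 * (∫⁻ z, ENNReal.ofReal (|T ((k:ℝ)+1) (u z) - u z| ^ q) ∂lam)) atTop (nhds 0) := by
    have t0 : Tendsto (fun k : ℕ => ((k:ℝ)+1) ^ (q - p)) atTop (nhds 0) := by
      have h1 := tendsto_rpow_neg_atTop (y := p - q) (by linarith)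
      have hcast : Tendsto (fun k : ℕ => (k:ℝ)+1) atTop atTop :=
        tendsto_atTop_add_const_right _ 1 tendsto_natCast_atTop_atTop
      have := h1.comp hcast
      simpa [Function.comp_def, neg_sub] using this
    have t1 : Tendsto (fun k : ℕ => D2 * (ENNReal.ofReal (((k:ℝ)+1) ^ (q - p)) * C))
        atTop (nhds 0) := by
      have h1 := ENNReal.tendsto_ofReal t0
      rw [ENNReal.ofReal_zero] at h1
      have h2 := ENNReal.Tendsto.mul_const (b := C) h1 (Or.inr hC.ne)
      rw [zero_mul] at h2
      have h3 := ENNReal.Tendsto.const_mul (a := D2) h2 (Or.inr hD2ne)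
      simpa using h3
    have t2 : Tendsto (fun k : ℕ =>
        D2 * (∫⁻ z, ENNReal.ofReal (|T ((k:ℝ)+1) (u z) - u z| ^ q) ∂lam)) atTop (nhds 0) := by
      have := ENNReal.Tendsto.const_mul (a := D2) hT3 (Or.inr hD2ne)
      simpa using this
    simpa using t1.add t2
  have hhalf : (0:ℝ≥0∞) < ENNReal.ofReal (ε/4) := ENNReal.ofReal_pos.mpr (by linarith)
  obtain ⟨k0, hk0⟩ := (hRlim.eventually_lt_const hhalf).exists
  set R : ℝ := (k0:ℝ) + 1 with hRdef
  have hR1 : (1:ℝ) ≤ R := le_add_of_nonneg_left (Nat.cast_nonneg k0)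
  have hWn : Tendsto (fun n => D2 * (ENNReal.ofReal ((2*R) ^ (q-1)) * ENNReal.ofReal (A n R)))
      atTop (nhds 0) := by
    have h1 : Tendsto (fun n => ENNReal.ofReal (A n R)) atTop (nhds 0) := by
      have := ENNReal.tendsto_ofReal (hW R)
      rwa [ENNReal.ofReal_zero] at this
    have h2 := ENNReal.Tendsto.const_mul (a := ENNReal.ofReal ((2*R) ^ (q-1))) h1
      (Or.inr ENNReal.ofReal_ne_top)
    rw [mul_zero] at h2
    have h3 := ENNReal.Tendsto.const_mul (a := D2) h2 (Or.inr hD2ne)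
    simpa using h3
  obtain ⟨N, hN⟩ := eventually_atTop.mp (hWn.eventually_lt_const hhalf)
  refine ⟨N, fun n hn => ?_⟩
  have hLn : (∫⁻ z, ENNReal.ofReal (|(∫ ξ, ξ ∂ν n z) - u z| ^ q) ∂lam)
      ≤ ENNReal.ofReal (ε/2) := by
    calc (∫⁻ z, ENNReal.ofReal (|(∫ ξ, ξ ∂ν n z) - u z| ^ q) ∂lam)
        ≤ (D2 * (ENNReal.ofReal (R ^ (q - p)) * C)
            + D2 * (∫⁻ z, ENNReal.ofReal (|T R (u z) - u z| ^ q) ∂lam))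
          + D2 * (ENNReal.ofReal ((2*R) ^ (q-1)) * ENNReal.ofReal (A n R)) := hL R hR1 n
    _ ≤ ENNReal.ofReal (ε/4) + ENNReal.ofReal (ε/4) := add_le_add hk0.le (hN n hn).le
    _ = ENNReal.ofReal (ε/2) := by
        rw [← ENNReal.ofReal_add (by linarith) (by linarith)]
        ring_nf
  rw [Real.dist_eq, sub_zero, abs_of_nonneg (by
    rw [hrepr n]; exact ENNReal.toReal_nonneg)]
  rw [hrepr n]
  have hfin := ENNReal.toReal_le_of_le_ofReal (by linarith) hLn
  linarith
end

section
/- Let ν be a Borel probability measure on ℝ with finite first moment ∫_ℝ |ζ| dν(ζ) < ∞. Define the kinetic function f(ξ) = ν((ξ,+∞)) and the barycenter u = ∫_ℝ ζ dν(ζ). Then for every ξ ∈ ℝ, the function ζ ↦ 1_{u>ζ} − f(ζ) is Lebesgue-integrable on (−∞,ξ], and m(ξ) := ∫_{−∞}^{ξ} (1_{u>ζ} − f(ζ)) dζ ≥ 0. -/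
open MeasureTheory Set

private lemma ofReal_max_zero' (x : ℝ) :
    ENNReal.ofReal (max x 0) = ENNReal.ofReal x := by
  rcases le_total x 0 with h | h
  · simp [max_eq_right h, ENNReal.ofReal_of_nonpos h]
  · simp [max_eq_left h]

private lemma toReal_ofReal_max (x : ℝ) :
    (ENNReal.ofReal x).toReal = max x 0 := by
  rcases le_total x 0 with h | h
  · simp [ENNReal.ofReal_of_nonpos h, max_eq_right h]
  · simp [ENNReal.toReal_ofReal h, max_eq_left h]

private lemma lintegral_Iic_measure_Iic (ν : Measure ℝ) [IsProbabilityMeasure ν] (ξ : ℝ) :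
    ∫⁻ ζ in Set.Iic ξ, ν (Set.Iic ζ) ∂volume
      = ∫⁻ z, ENNReal.ofReal (ξ - z) ∂ν := by
  have hmeas : Measurable (Function.uncurry fun (ζ : ℝ) (z : ℝ) => if z ≤ ζ then (1:ENNReal) else 0) := by
    have hs : MeasurableSet {p : ℝ × ℝ | p.2 ≤ p.1} :=
      measurableSet_le measurable_snd measurable_fst
    exact Measurable.ite hs measurable_const measurable_const
  have swap := lintegral_lintegral_swap (μ := volume.restrict (Set.Iic ξ)) (ν := ν)
    (f := fun ζ z => if z ≤ ζ then (1:ENNReal) else 0) hmeas.aemeasurable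
  have h1 : ∀ ζ : ℝ, ∫⁻ z, (if z ≤ ζ then (1:ENNReal) else 0) ∂ν = ν (Set.Iic ζ) := by
    intro ζ
    rw [show (fun z => if z ≤ ζ then (1:ENNReal) else 0)
        = (Set.Iic ζ).indicator (fun _ => 1) by
      ext z; simp [Set.indicator_apply]]
    rw [lintegral_indicator measurableSet_Iic]
    simp
  have h2 : ∀ z : ℝ, ∫⁻ ζ in Set.Iic ξ, (if z ≤ ζ then (1:ENNReal) else 0) ∂volume
      = ENNReal.ofReal (ξ - z) := by
    intro z
    rw [show (fun ζ => if z ≤ ζ then (1:ENNReal) else 0)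
        = (Set.Ici z).indicator (fun _ => 1) by
      ext ζ; simp [Set.indicator_apply]]
    rw [lintegral_indicator measurableSet_Ici]
    simp [Measure.restrict_apply, Set.Ici_inter_Iic, Real.volume_Icc]
  calc ∫⁻ ζ in Set.Iic ξ, ν (Set.Iic ζ) ∂volume
      = ∫⁻ ζ in Set.Iic ξ, ∫⁻ z, (if z ≤ ζ then (1:ENNReal) else 0) ∂ν ∂volume := by
        exact lintegral_congr fun ζ => (h1 ζ).symm
    _ = ∫⁻ z, ∫⁻ ζ in Set.Iic ξ, (if z ≤ ζ then (1:ENNReal) else 0) ∂volume ∂ν := swap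
    _ = ∫⁻ z, ENNReal.ofReal (ξ - z) ∂ν := lintegral_congr h2

/-- **Distance to equilibrium (pointwise content of Lemma 2.16).** Let `ν` be a Borel
probability measure on `ℝ` with finite first moment, `f ξ = ν (Ioi ξ)` its kinetic
function and `u = ∫ ζ dν(ζ)` its barycenter. Then for every `ξ ∈ ℝ`, the function
`ζ ↦ 1_{u > ζ} - f ζ` is Lebesgue-integrable on `(-∞, ξ]` and
`m(ξ) = ∫_{-∞}^{ξ} (1_{u > ζ} - f ζ) dζ ≥ 0`. -/
theorem stmt2 (ν : Measure ℝ) [IsProbabilityMeasure ν]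
    (hmom : Integrable (fun ζ => |ζ|) ν) :
    ∀ ξ : ℝ,
      IntegrableOn
        (fun ζ => (if ζ < ∫ z, z ∂ν then (1:ℝ) else 0) - (ν (Set.Ioi ζ)).toReal)
        (Set.Iic ξ) volume ∧
      0 ≤ ∫ ζ in Set.Iic ξ,
        ((if ζ < ∫ z, z ∂ν then (1:ℝ) else 0) - (ν (Set.Ioi ζ)).toReal) := by
  intro ξ
  set u : ℝ := ∫ z, z ∂ν with hu
  -- the barycenter-truncation function
  set F : ℝ → ℝ := fun z => max (ξ - z) 0 with hF
  have hid : Integrable (fun z : ℝ => z) ν :=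
    hmom.mono' measurable_id.aestronglyMeasurable
      (Filter.Eventually.of_forall fun z => le_of_eq (Real.norm_eq_abs z))
  have hFint : Integrable F ν := by
    refine (Integrable.add (integrable_const |ξ|) hmom).mono'
      ((continuous_const.sub continuous_id).max continuous_const).aestronglyMeasurable
      (Filter.Eventually.of_forall fun z => ?_)
    have h1 : max (ξ - z) 0 ≤ |ξ - z| := max_le (le_abs_self _) (abs_nonneg _)
    have h2 : |ξ - z| ≤ |ξ| + |z| := by
      rw [sub_eq_add_neg]
      exact (abs_add_le ξ (-z)).trans (by simp)
    simp only [Pi.add_apply]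
    rw [Real.norm_eq_abs, abs_of_nonneg (le_max_right _ _)]
    exact h1.trans h2
  -- the lintegral identity and its finiteness
  have hL := lintegral_Iic_measure_Iic ν ξ
  have hLfin : ∫⁻ ζ in Set.Iic ξ, ν (Set.Iic ζ) ∂volume < ⊤ := by
    rw [hL]
    have hb : ∀ z : ℝ, ENNReal.ofReal (ξ - z) ≤ ENNReal.ofReal |ξ| + ENNReal.ofReal |z| := by
      intro z
      rw [← ENNReal.ofReal_add (abs_nonneg _) (abs_nonneg _)]
      refine ENNReal.ofReal_le_ofReal ?_
      calc ξ - z ≤ |ξ - z| := le_abs_self _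
        _ ≤ |ξ| + |z| := by rw [sub_eq_add_neg]; exact (abs_add_le ξ (-z)).trans (by simp)
    calc ∫⁻ z, ENNReal.ofReal (ξ - z) ∂ν
        ≤ ∫⁻ z, (ENNReal.ofReal |ξ| + ENNReal.ofReal |z|) ∂ν := lintegral_mono hb
      _ = ENNReal.ofReal |ξ| + ∫⁻ z, ENNReal.ofReal |z| ∂ν := by
          rw [lintegral_add_left (by fun_prop), lintegral_const]
          simp
      _ < ⊤ := by
          have h2 := hmom.2
          rw [hasFiniteIntegral_iff_norm] at h2
          simp only [Real.norm_eq_abs, abs_abs] at h2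
          exact ENNReal.add_lt_top.2 ⟨ENNReal.ofReal_lt_top, h2⟩
  -- measurability of ζ ↦ ν (Iic ζ)
  have hmono : Monotone (fun ζ => ν (Set.Iic ζ)) :=
    fun a b hab => measure_mono (Set.Iic_subset_Iic.2 hab)
  have hmeas : Measurable (fun ζ => ν (Set.Iic ζ)) := hmono.measurable
  have hmeasR : Measurable (fun ζ => (ν (Set.Iic ζ)).toReal) :=
    ENNReal.measurable_toReal.comp hmeas
  -- integrability of h1 on Iic ξ
  have hint1 : IntegrableOn (fun ζ => (ν (Set.Iic ζ)).toReal) (Set.Iic ξ) volume := by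
    refine ⟨hmeasR.aestronglyMeasurable, ?_⟩
    rw [hasFiniteIntegral_iff_norm]
    have : ∀ ζ : ℝ, ENNReal.ofReal ‖(ν (Set.Iic ζ)).toReal‖ = ν (Set.Iic ζ) := by
      intro ζ
      rw [Real.norm_eq_abs, abs_of_nonneg ENNReal.toReal_nonneg,
        ENNReal.ofReal_toReal (measure_ne_top ν _)]
    rw [lintegral_congr this]
    exact hLfin
  -- value of ∫ h1
  have hval1 : ∫ ζ in Set.Iic ξ, (ν (Set.Iic ζ)).toReal
      = (∫⁻ ζ in Set.Iic ξ, ν (Set.Iic ζ) ∂volume).toReal := by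
    exact integral_toReal hmeas.aemeasurable
      (Filter.Eventually.of_forall fun ζ => measure_lt_top ν _)
  have hvalF : ∫ z, F z ∂ν = (∫⁻ z, ENNReal.ofReal (ξ - z) ∂ν).toReal := by
    rw [integral_eq_lintegral_of_nonneg_ae (f := F) (μ := ν)
      (Filter.Eventually.of_forall fun z => le_max_right (ξ - z) 0)
      hFint.aestronglyMeasurable]
    congr 1
    exact lintegral_congr fun z => ofReal_max_zero' (ξ - z)
  have hFeq : ∫ ζ in Set.Iic ξ, (ν (Set.Iic ζ)).toReal = ∫ z, F z ∂ν := by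
    rw [hval1, hvalF, hL]
  -- the indicator part
  have hint2 : IntegrableOn ((Set.Icc u ξ).indicator (fun _ => (1:ℝ))) (Set.Iic ξ) volume := by
    refine Integrable.integrableOn ?_
    rw [integrable_indicator_iff measurableSet_Icc]
    exact integrableOn_const (by simp [Real.volume_Icc, ENNReal.ofReal_lt_top])
  have hval2 : ∫ ζ in Set.Iic ξ, (Set.Icc u ξ).indicator (fun _ => (1:ℝ)) ζ
      = max (ξ - u) 0 := by
    rw [setIntegral_indicator measurableSet_Icc]
    rw [Set.inter_eq_right.2 (Set.Icc_subset_Iic_self)]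
    rw [setIntegral_const]
    simp [Real.volume_Icc, toReal_ofReal_max]
  -- the integrand agrees with h1 - h2 on Iic ξ
  have heq : Set.EqOn
      (fun ζ => (if ζ < u then (1:ℝ) else 0) - (ν (Set.Ioi ζ)).toReal)
      (fun ζ => (ν (Set.Iic ζ)).toReal - (Set.Icc u ξ).indicator (fun _ => (1:ℝ)) ζ)
      (Set.Iic ξ) := by
    intro ζ hζ
    have hcompl : ν (Set.Ioi ζ) = 1 - ν (Set.Iic ζ) := by
      rw [← Set.compl_Iic, measure_compl measurableSet_Iic (measure_ne_top ν _)]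
      simp
    have hle : ν (Set.Iic ζ) ≤ 1 := (measure_mono (Set.subset_univ _)).trans (by simp)
    have htr : (ν (Set.Ioi ζ)).toReal = 1 - (ν (Set.Iic ζ)).toReal := by
      rw [hcompl, ENNReal.toReal_sub_of_le hle (by simp)]
      simp
    simp only
    rw [htr]
    rcases lt_or_ge ζ u with h | h
    · rw [if_pos h, Set.indicator_of_notMem (by simp [Set.mem_Icc]; intro h'; linarith)]
      ring
    · rw [if_neg (not_lt.2 h), Set.indicator_of_mem (Set.mem_Icc.2 ⟨h, hζ⟩)]
      ring
  have hintg : IntegrableOn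
      (fun ζ => (if ζ < u then (1:ℝ) else 0) - (ν (Set.Ioi ζ)).toReal)
      (Set.Iic ξ) volume :=
    (IntegrableOn.congr_fun (hint1.sub hint2) heq.symm measurableSet_Iic)
  refine ⟨hintg, ?_⟩
  rw [setIntegral_congr_fun measurableSet_Iic heq, integral_sub hint1 hint2, hFeq, hval2]
  have hge1 : ξ - u ≤ ∫ z, F z ∂ν := by
    have : ∫ z, (ξ - z) ∂ν ≤ ∫ z, F z ∂ν := by
      refine integral_mono ((integrable_const ξ).sub hid) hFint fun z => le_max_left _ _
    rwa [integral_sub (integrable_const ξ) hid, integral_const, probReal_univ,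
      one_smul, ← hu] at this
  have hge2 : (0:ℝ) ≤ ∫ z, F z ∂ν := integral_nonneg fun z => le_max_right _ _
  have : max (ξ - u) 0 ≤ ∫ z, F z ∂ν := max_le hge1 hge2
  linarith
end

section
/- Let μ and ν be Borel probability measures on ℝ with finite first moments, and let ψ : ℝ → [0,∞) be continuous with compact support. Define ψ₁(ξ) = ∫_{−∞}^{ξ} ψ(s) ds and ψ₂(ζ) = ∫_{−∞}^{ζ} ψ₁(ξ) dξ. Then ∫_{ℝ²} ψ(ξ−ζ) μ((ξ,+∞)) ν((−∞,ζ)) dξ dζ = ∫_{ℝ²} ψ₂(u−v) dμ(u) dν(v), and both sides are finite. -/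
open MeasureTheory Set
open scoped ENNReal

variable {ψ : ℝ → ℝ}

lemma aux_cont_Iic' (hcont : Continuous ψ) (hint : ∀ c : ℝ, IntegrableOn ψ (Iic c)) :
    Continuous (fun x => ∫ s in Iic x, ψ s) := by
  have h : (fun x => ∫ s in Iic x, ψ s)
      = fun x => (∫ s in Iic (0:ℝ), ψ s) + ∫ s in (0:ℝ)..x, ψ s := by
    funext x
    rw [← intervalIntegral.integral_Iic_sub_Iic (hint 0) (hint x)]
    ring
  rw [h]
  exact continuous_const.add
    (intervalIntegral.continuous_primitive (fun a b => hcont.intervalIntegrable a b) 0)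

-- zero on Iic a implies integrable on each Iic c
lemma aux_intOn_Iic (hcont : Continuous ψ) {a : ℝ} (hzero : ∀ x ≤ a, ψ x = 0) (c : ℝ) :
    IntegrableOn ψ (Iic c) := by
  have h1 : IntegrableOn ψ (Iic a) :=
    (integrableOn_zero).congr_fun (fun x hx => (hzero x hx).symm) measurableSet_Iic
  have h2 : IntegrableOn ψ (Icc a c) := hcont.continuousOn.integrableOn_Icc
  refine (h1.union h2).mono_set ?_
  intro x hx
  rcases le_total x a with h | h
  · exact Or.inl h
  · exact Or.inr ⟨h, hx⟩

lemma aux_bound (hcont : Continuous ψ) {a M : ℝ} (hM : 0 ≤ M) (hzero : ∀ x ≤ a, ψ x = 0)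
    (h0 : ∀ x, 0 ≤ ψ x) (hle : ∀ x, ψ x ≤ M) (x : ℝ) :
    ∫ t in Iic x, ψ t ≤ M * (|x| + |a|) := by
  have hRHS : 0 ≤ M * (|x| + |a|) := by positivity
  rcases le_total x a with h | h
  · have : ∫ t in Iic x, ψ t = 0 := by
      rw [setIntegral_congr_fun measurableSet_Iic (g := fun _ => (0:ℝ))
        (fun t ht => hzero t (le_trans ht h))]
      simp
    rw [this]; exact hRHS
  · have hdisj : Disjoint (Iic a) (Ioc a x) := by
      rw [Set.disjoint_left]
      rintro t (ht : t ≤ a) ⟨ht2, -⟩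
      exact absurd ht (not_le.2 ht2)
    have hint1 : IntegrableOn ψ (Iic a) :=
      (integrableOn_zero).congr_fun (fun t ht => (hzero t ht).symm) measurableSet_Iic
    have hint2 : IntegrableOn ψ (Ioc a x) :=
      (aux_intOn_Iic hcont hzero x).mono_set Ioc_subset_Iic_self
    rw [← Iic_union_Ioc_eq_Iic h, setIntegral_union hdisj measurableSet_Ioc hint1 hint2]
    have h1 : ∫ t in Iic a, ψ t = 0 := by
      rw [setIntegral_congr_fun measurableSet_Iic (g := fun _ => (0:ℝ)) (fun t ht => hzero t ht)]
      simp
    have h2 : ∫ t in Ioc a x, ψ t ≤ ∫ _t in Ioc a x, M := by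
      refine setIntegral_mono_on hint2 ?_ measurableSet_Ioc (fun t _ => hle t)
      exact integrableOn_const measure_Ioc_lt_top.ne
    have h3 : ∫ _t in Ioc a x, M = (x - a) * M := by
      rw [setIntegral_const, measureReal_def, Real.volume_Ioc, ENNReal.toReal_ofReal (sub_nonneg.2 h),
        smul_eq_mul]
    have h4 : x - a ≤ |x| + |a| := by
      have := le_abs_self x; have := neg_abs_le a; linarith
    rw [h1, zero_add]
    calc ∫ t in Ioc a x, ψ t ≤ (x - a) * M := h3 ▸ h2
      _ ≤ (|x| + |a|) * M := mul_le_mul_of_nonneg_right h4 hM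
      _ = M * (|x| + |a|) := mul_comm _ _

lemma aux_R1 (hψint : Integrable ψ) (u ζ : ℝ) :
    ∫ ξ in Iio u, ψ (ξ - ζ) = ∫ s in Iic (u - ζ), ψ s := by
  rw [← integral_indicator measurableSet_Iio]
  have key : (fun ξ => (Iio u).indicator (fun ξ' => ψ (ξ' - ζ)) ξ)
      = fun ξ => (Iio (u - ζ)).indicator ψ (ξ - ζ) := by
    funext ξ
    by_cases h : ξ < u
    · rw [indicator_of_mem (mem_Iio.2 h), indicator_of_mem (mem_Iio.2 (by linarith))]
    · rw [indicator_of_notMem (by simpa using h),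
        indicator_of_notMem (by simp only [mem_Iio, not_lt] at h ⊢; linarith)]
  rw [key, integral_sub_right_eq_self ((Iio (u - ζ)).indicator ψ) ζ,
    integral_indicator measurableSet_Iio, setIntegral_congr_set Iio_ae_eq_Iic]

lemma aux_ind2 (u v : ℝ) (g : ℝ → ℝ) :
    (Ioi v).indicator (fun ζ' => g (u - ζ'))
      = fun ζ => (Iio (u - v)).indicator g (u - ζ) := by
  funext ζ
  by_cases h : v < ζ
  · rw [indicator_of_mem (mem_Ioi.2 h), indicator_of_mem (mem_Iio.2 (by linarith))]
  · rw [indicator_of_notMem (by simpa using h),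
      indicator_of_notMem (fun hmem => h (by have := mem_Iio.1 hmem; linarith))]

lemma aux_R2 {g : ℝ → ℝ} (u v : ℝ) :
    ∫ ζ in Ioi v, g (u - ζ) = ∫ t in Iic (u - v), g t := by
  rw [← integral_indicator measurableSet_Ioi, aux_ind2 u v g,
    integral_sub_left_eq_self ((Iio (u - v)).indicator g) volume u,
    integral_indicator measurableSet_Iio, setIntegral_congr_set Iio_ae_eq_Iic]

lemma aux_int2 {g : ℝ → ℝ} (hint : ∀ c : ℝ, IntegrableOn g (Iic c)) (u v : ℝ) :
    IntegrableOn (fun ζ => g (u - ζ)) (Ioi v) := by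
  refine (integrable_indicator_iff measurableSet_Ioi).1 ?_
  rw [aux_ind2 u v g]
  exact (((integrable_indicator_iff measurableSet_Iio).2
    ((hint (u - v)).mono_set Iio_subset_Iic_self)).comp_sub_left u)

/-- **Identity (psifbarf) from Remark 3.2.** Let `μ, ν` be Borel probability measures on
`ℝ` with finite first moments, and `ψ : ℝ → [0, ∞)` continuous with compact support.
With `ψ₁ ξ = ∫_{-∞}^{ξ} ψ` and `ψ₂ ζ = ∫_{-∞}^{ζ} ψ₁`, one has
`∫∫ ψ(ξ - ζ) μ(Ioi ξ) ν(Iio ζ) dξ dζ = ∫∫ ψ₂(u - v) dμ(u) dν(v)`,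
and both sides are finite (the integrands are integrable). -/
theorem stmt3 (μ ν : Measure ℝ) [IsProbabilityMeasure μ] [IsProbabilityMeasure ν]
    (hμ : Integrable (fun u => |u|) μ) (hν : Integrable (fun v => |v|) ν)
    (ψ : ℝ → ℝ) (hψc : Continuous ψ) (hψ0 : ∀ s, 0 ≤ ψ s) (hψsupp : HasCompactSupport ψ) :
    Integrable
      (fun q : ℝ × ℝ => ψ (q.1 - q.2) * (μ (Set.Ioi q.1)).toReal * (ν (Set.Iio q.2)).toReal)
      (volume.prod volume) ∧
    Integrable
      (fun q : ℝ × ℝ => ∫ ξ in Set.Iic (q.1 - q.2), ∫ s in Set.Iic ξ, ψ s)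
      (μ.prod ν) ∧
    ∫ q : ℝ × ℝ, ψ (q.1 - q.2) * (μ (Set.Ioi q.1)).toReal * (ν (Set.Iio q.2)).toReal
        ∂(volume.prod volume)
      = ∫ q : ℝ × ℝ, (∫ ξ in Set.Iic (q.1 - q.2), ∫ s in Set.Iic ξ, ψ s) ∂(μ.prod ν) := by
  have hψint : Integrable ψ (volume : Measure ℝ) :=
    hψc.integrable_of_hasCompactSupport hψsupp
  obtain ⟨R, hR⟩ := hψsupp.isBounded.subset_closedBall 0
  set a : ℝ := -(R + 1) with ha
  have hψzero : ∀ s ≤ a, ψ s = 0 := by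
    intro s hs
    apply image_eq_zero_of_notMem_tsupport
    intro hmem
    have h1 := hR hmem
    rw [Real.closedBall_eq_Icc] at h1
    have h2 : -R ≤ s := by linarith [h1.1]
    rw [ha] at hs
    linarith
  set M : ℝ := ∫ s, ψ s with hM
  have hM0 : 0 ≤ M := integral_nonneg hψ0
  set ψ₁ : ℝ → ℝ := fun x => ∫ s in Iic x, ψ s with hψ₁
  set ψ₂ : ℝ → ℝ := fun x => ∫ t in Iic x, ψ₁ t with hψ₂
  have hψ1nn : ∀ x, 0 ≤ ψ₁ x :=
    fun x => setIntegral_nonneg measurableSet_Iic (fun s _ => hψ0 s)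
  have hψ1zero : ∀ x ≤ a, ψ₁ x = 0 := by
    intro x hx
    rw [hψ₁]
    simp only
    rw [setIntegral_congr_fun measurableSet_Iic (g := fun _ => (0:ℝ))
      (fun s hs => hψzero s (le_trans hs hx))]
    simp
  have hψ1M : ∀ x, ψ₁ x ≤ M :=
    fun x => setIntegral_le_integral hψint (Filter.Eventually.of_forall hψ0)
  have hψ1cont : Continuous ψ₁ :=
    aux_cont_Iic' hψc (fun c => hψint.integrableOn)
  have hψ1int : ∀ c : ℝ, IntegrableOn ψ₁ (Iic c) := aux_intOn_Iic hψ1cont hψ1zero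
  have hψ2cont : Continuous ψ₂ := aux_cont_Iic' hψ1cont hψ1int
  have hψ2nn : ∀ x, 0 ≤ ψ₂ x :=
    fun x => setIntegral_nonneg measurableSet_Iic (fun t _ => hψ1nn t)
  have hψ2bound : ∀ x, ψ₂ x ≤ M * (|x| + |a|) :=
    aux_bound hψ1cont hM0 hψ1zero hψ1nn hψ1M
  -- pointwise bound on the product
  have hpt : ∀ p : ℝ × ℝ, ψ₂ (p.1 - p.2) ≤ M * (|p.1| + |p.2| + |a|) := by
    intro p
    have habs : |p.1 - p.2| ≤ |p.1| + |p.2| := by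
      simpa [sub_eq_add_neg] using abs_add_le p.1 (-p.2)
    calc ψ₂ (p.1 - p.2) ≤ M * (|p.1 - p.2| + |a|) := hψ2bound _
      _ ≤ M * (|p.1| + |p.2| + |a|) := by
          apply mul_le_mul_of_nonneg_left _ hM0
          linarith
  -- integrable bound on μ.prod ν
  have hb1 : Integrable (fun p : ℝ × ℝ => |p.1|) (μ.prod ν) := by
    have hmap : Measure.map Prod.fst (μ.prod ν) = μ := by
      rw [Measure.map_fst_prod]; simp
    have h := integrable_map_measure (μ := μ.prod ν) (f := Prod.fst)
      (g := fun u : ℝ => |u|)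
      (by rw [hmap]; exact continuous_abs.aestronglyMeasurable)
      measurable_fst.aemeasurable
    exact h.1 (by rw [hmap]; exact hμ)
  have hb2 : Integrable (fun p : ℝ × ℝ => |p.2|) (μ.prod ν) := by
    have hmap : Measure.map Prod.snd (μ.prod ν) = ν := by
      rw [Measure.map_snd_prod]; simp
    have h := integrable_map_measure (μ := μ.prod ν) (f := Prod.snd)
      (g := fun v : ℝ => |v|)
      (by rw [hmap]; exact continuous_abs.aestronglyMeasurable)
      measurable_snd.aemeasurable
    exact h.1 (by rw [hmap]; exact hν)
  have hbound_int : Integrable (fun p : ℝ × ℝ => M * (|p.1| + |p.2| + |a|)) (μ.prod ν) :=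
    (((hb1.add hb2).add (integrable_const _)).const_mul M)
  have h2meas : AEStronglyMeasurable (fun p : ℝ × ℝ => ψ₂ (p.1 - p.2)) (μ.prod ν) :=
    (hψ2cont.comp (continuous_fst.sub continuous_snd)).aestronglyMeasurable
  have h2int : Integrable (fun p : ℝ × ℝ => ψ₂ (p.1 - p.2)) (μ.prod ν) := by
    refine Integrable.mono' hbound_int h2meas (Filter.Eventually.of_forall fun p => ?_)
    rw [Real.norm_eq_abs, abs_of_nonneg (hψ2nn _)]
    exact hpt p
  -- the kernel function
  set F : ℝ × ℝ → ℝ × ℝ → ℝ≥0∞ := fun q p =>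
    ENNReal.ofReal (ψ (q.1 - q.2)) * (Ioi q.1).indicator 1 p.1
      * (Iio q.2).indicator 1 p.2 with hF
  have hFmeas : Measurable (Function.uncurry F) := by
    show Measurable fun x : (ℝ × ℝ) × ℝ × ℝ =>
      ENNReal.ofReal (ψ (x.1.1 - x.1.2)) * (Ioi x.1.1).indicator 1 x.2.1
        * (Iio x.1.2).indicator 1 x.2.2
    apply Measurable.mul
    apply Measurable.mul
    · exact ENNReal.measurable_ofReal.comp
        (hψc.measurable.comp ((measurable_fst.fst).sub (measurable_fst.snd)))
    · have h : (fun x : (ℝ × ℝ) × ℝ × ℝ => (Ioi x.1.1).indicator (1 : ℝ → ℝ≥0∞) x.2.1)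
          = fun x => if x.1.1 < x.2.1 then 1 else 0 := by
        funext x; simp [Set.indicator_apply]
      rw [h]
      exact Measurable.ite (measurableSet_lt measurable_fst.fst measurable_snd.fst)
        measurable_const measurable_const
    · have h : (fun x : (ℝ × ℝ) × ℝ × ℝ => (Iio x.1.2).indicator (1 : ℝ → ℝ≥0∞) x.2.2)
          = fun x => if x.2.2 < x.1.2 then 1 else 0 := by
        funext x; simp [Set.indicator_apply]
      rw [h]
      exact Measurable.ite (measurableSet_lt measurable_snd.snd measurable_fst.snd)
        measurable_const measurable_const
  have hKey1 : ∀ q : ℝ × ℝ, ∫⁻ p, F q p ∂(μ.prod ν)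
      = ENNReal.ofReal (ψ (q.1 - q.2)) * (μ (Ioi q.1) * ν (Iio q.2)) := by
    intro q
    have hrw : F q = fun p : ℝ × ℝ =>
        ENNReal.ofReal (ψ (q.1 - q.2)) * (Ioi q.1 ×ˢ Iio q.2).indicator 1 p := by
      funext p
      rw [hF]
      simp only [mul_assoc]
      congr 1
      by_cases h1 : p.1 ∈ Ioi q.1 <;> by_cases h2 : p.2 ∈ Iio q.2 <;>
        simp [Set.indicator_apply, h1, h2, Set.mem_prod]
    rw [hrw,
      lintegral_const_mul _ (measurable_one.indicator (measurableSet_Ioi.prod measurableSet_Iio)),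
      lintegral_indicator_one (measurableSet_Ioi.prod measurableSet_Iio), Measure.prod_prod]
  have hL1 : ∀ u ζ : ℝ, ∫⁻ ξ in Iio u, ENNReal.ofReal (ψ (ξ - ζ))
      = ENNReal.ofReal (ψ₁ (u - ζ)) := by
    intro u ζ
    rw [← ofReal_integral_eq_lintegral_ofReal ((hψint.comp_sub_right ζ).integrableOn)
      (Filter.Eventually.of_forall fun ξ => hψ0 _), aux_R1 hψint u ζ]
  have hL2 : ∀ u v : ℝ, ∫⁻ ζ in Ioi v, ENNReal.ofReal (ψ₁ (u - ζ))
      = ENNReal.ofReal (ψ₂ (u - v)) := by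
    intro u v
    rw [← ofReal_integral_eq_lintegral_ofReal (aux_int2 hψ1int u v)
      (Filter.Eventually.of_forall fun ζ => hψ1nn _), aux_R2 u v]
  have hKey2 : ∀ p : ℝ × ℝ, ∫⁻ q, F q p ∂(volume.prod volume)
      = ENNReal.ofReal (ψ₂ (p.1 - p.2)) := by
    intro p
    have hrw : (fun q : ℝ × ℝ => F q p)
        = (Iio p.1 ×ˢ Ioi p.2).indicator
            (fun q : ℝ × ℝ => ENNReal.ofReal (ψ (q.1 - q.2))) := by
      funext q
      by_cases h1 : q.1 < p.1 <;> by_cases h2 : p.2 < q.2 <;>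
        simp [hF, Set.indicator_apply, Set.mem_prod, h1, h2]
    have hm : Measurable fun q : ℝ × ℝ => ENNReal.ofReal (ψ (q.1 - q.2)) :=
      ENNReal.measurable_ofReal.comp (hψc.measurable.comp (measurable_fst.sub measurable_snd))
    rw [hrw, lintegral_indicator (measurableSet_Iio.prod measurableSet_Ioi),
      ← Measure.prod_restrict,
      lintegral_prod_symm (μ := volume.restrict (Iio p.1)) (ν := volume.restrict (Ioi p.2))
        (fun q : ℝ × ℝ => ENNReal.ofReal (ψ (q.1 - q.2))) hm.aemeasurable]
    calc ∫⁻ ζ in Ioi p.2, ∫⁻ ξ in Iio p.1, ENNReal.ofReal (ψ (ξ - ζ))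
        = ∫⁻ ζ in Ioi p.2, ENNReal.ofReal (ψ₁ (p.1 - ζ)) :=
          lintegral_congr fun ζ => hL1 p.1 ζ
      _ = ENNReal.ofReal (ψ₂ (p.1 - p.2)) := hL2 p.1 p.2
  have hswap := lintegral_lintegral_swap (μ := (volume : Measure ℝ).prod volume)
    (ν := μ.prod ν) hFmeas.aemeasurable
  have hmain : ∫⁻ q : ℝ × ℝ, ENNReal.ofReal (ψ (q.1 - q.2)) * (μ (Ioi q.1) * ν (Iio q.2))
        ∂(volume.prod volume)
      = ∫⁻ p : ℝ × ℝ, ENNReal.ofReal (ψ₂ (p.1 - p.2)) ∂(μ.prod ν) := by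
    rw [← lintegral_congr hKey1, hswap, lintegral_congr hKey2]
  have hfin : ∫⁻ p : ℝ × ℝ, ENNReal.ofReal (ψ₂ (p.1 - p.2)) ∂(μ.prod ν) < ⊤ := by
    refine lt_of_le_of_lt (lintegral_mono fun p => ENNReal.ofReal_le_ofReal (hpt p)) ?_
    exact hbound_int.lintegral_lt_top
  -- the left-hand side function
  set G : ℝ × ℝ → ℝ := fun q =>
    ψ (q.1 - q.2) * (μ (Ioi q.1)).toReal * (ν (Iio q.2)).toReal with hG
  have hμm : Measurable fun ξ : ℝ => μ (Ioi ξ) :=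
    Antitone.measurable (fun x y hxy => measure_mono (Ioi_subset_Ioi hxy))
  have hνm : Measurable fun ζ : ℝ => ν (Iio ζ) :=
    Monotone.measurable (fun x y hxy => measure_mono (Iio_subset_Iio hxy))
  have hGmeas : Measurable G :=
    ((hψc.measurable.comp (measurable_fst.sub measurable_snd)).mul
      ((hμm.comp measurable_fst).ennreal_toReal)).mul
      ((hνm.comp measurable_snd).ennreal_toReal)
  have hGnn : ∀ q, 0 ≤ G q := by
    intro q
    apply mul_nonneg (mul_nonneg (hψ0 _) ENNReal.toReal_nonneg) ENNReal.toReal_nonneg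
  have hofreal : ∀ q : ℝ × ℝ, ENNReal.ofReal (G q)
      = ENNReal.ofReal (ψ (q.1 - q.2)) * (μ (Ioi q.1) * ν (Iio q.2)) := by
    intro q
    rw [hG]
    simp only
    rw [ENNReal.ofReal_mul (mul_nonneg (hψ0 _) ENNReal.toReal_nonneg),
      ENNReal.ofReal_mul (hψ0 _),
      ENNReal.ofReal_toReal (measure_ne_top μ _),
      ENNReal.ofReal_toReal (measure_ne_top ν _), mul_assoc]
  have hGint : Integrable G (volume.prod volume) := by
    refine ⟨hGmeas.aestronglyMeasurable, ?_⟩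
    rw [hasFiniteIntegral_iff_ofReal (Filter.Eventually.of_forall hGnn),
      lintegral_congr hofreal, hmain]
    exact hfin
  -- final rewriting: the ψ₂ form equals the statement's iterated integral
  have hform : (fun q : ℝ × ℝ => ∫ ξ in Set.Iic (q.1 - q.2), ∫ s in Set.Iic ξ, ψ s)
      = fun p : ℝ × ℝ => ψ₂ (p.1 - p.2) := by
    funext q
    simp only [hψ₂, hψ₁]
  refine ⟨hGint, ?_, ?_⟩
  · rw [hform]; exact h2int
  · rw [hform]
    rw [integral_eq_lintegral_of_nonneg_ae (Filter.Eventually.of_forall hGnn)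
      hGmeas.aestronglyMeasurable,
      integral_eq_lintegral_of_nonneg_ae (Filter.Eventually.of_forall fun p => hψ2nn _)
      h2meas]
    rw [lintegral_congr hofreal, hmain]
end

section
/- Let μ and ν be Borel probability measures on ℝ with finite first moments M_μ = ∫|u| dμ(u) and M_ν = ∫|v| dν(v). Let ψ be a probability density on ℝ supported in (0,1), δ > 0, ψ_δ(ξ) = δ⁻¹ψ(ξ/δ), and let ψ_{2,δ} be the second antiderivative of ψ_δ vanishing at −∞. Then 0 ≤ ∫_{ℝ²} [ (u−v)⁺ − ψ_{2,δ}(u−v) ] dμ(u) dν(v) ≤ ∫_0^{+∞} [ min(M_μ, δw) + min(M_ν, δw) ] ψ(w) dw. -/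
/-!
Cauchy's formula for repeated integration and the substitution `s = δw` give
`ψ_{2,δ}(ξ) = ∫ ψ(w) (ξ - δw)⁺ dw`, so that `ξ⁺ - ψ_{2,δ}(ξ) = A(ξ⁺)` with
`A(r) = ∫₀^∞ min(r, δw) ψ(w) dw`. On `[0, ∞)` the function `A` is nonnegative, monotone and
subadditive, whence `A((u - v)⁺) ≤ A(|u|) + A(|v|)`. Integrating in `u` and exchanging the
order of integration, concavity of `min(·, δw)` gives `∫ A(|u|) dμ(u) ≤ A(M_μ)`.
-/

open MeasureTheory Set

noncomputable def secondAntideriv (g : ℝ → ℝ) (ξ : ℝ) : ℝ :=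
  ∫ ζ in Iic ξ, ∫ s in Iic ζ, g s

lemma integral_Ioc_indicator_Iic {g : ℝ → ℝ} (hg0 : ∀ t ≤ 0, g t = 0) (a t : ℝ) :
    ∫ η in Ioc 0 a, (Iic η).indicator g t = g t * max (a - t) 0 := by
  rcases le_or_gt t 0 with ht | ht
  · simp [indicator_apply, hg0 t ht]
  have h_ind : ∀ η, (Iic η).indicator g t = (Ici t).indicator (fun _ => g t) η := by
    intro η
    by_cases h : t ≤ η <;> simp [h]
  have h_inter : Ioc 0 a ∩ Ici t = Icc t a := by
    ext η
    simp only [mem_inter_iff, mem_Ioc, mem_Ici, mem_Icc]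
    grind
  simp_rw [h_ind]
  rw [setIntegral_indicator measurableSet_Ici, h_inter, setIntegral_const, Real.volume_real_Icc,
    smul_eq_mul, mul_comm]

/-- Cauchy's formula for repeated integration. -/
theorem secondAntideriv_eq_integral_mul_posPart {g : ℝ → ℝ} (hg : Integrable g)
    (hg0 : ∀ t ≤ 0, g t = 0) (a : ℝ) :
    secondAntideriv g a = ∫ t, g t * max (a - t) 0 := by
  have h_outer : ∫ η in Iic a, ∫ t in Iic η, g t = ∫ η in Ioc 0 a, ∫ t in Iic η, g t := by
    refine setIntegral_eq_of_subset_of_forall_sdiff_eq_zero (f := fun η => ∫ t in Iic η, g t)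
      measurableSet_Iic (Ioc_subset_Iic_self : Ioc (0 : ℝ) a ⊆ Iic a) fun η hη => ?_
    have hη0 : η ≤ 0 := by
      by_contra h
      exact hη.2 ⟨lt_of_not_ge h, hη.1⟩
    exact setIntegral_eq_zero_of_forall_eq_zero fun t ht => hg0 t (le_trans ht hη0)
  have h_int : Integrable (Function.uncurry fun η t => (Iic η).indicator g t)
      ((volume.restrict (Ioc 0 a)).prod volume) := by
    have h_meas : AEStronglyMeasurable (fun p : ℝ × ℝ => (Iic p.1).indicator g p.2)
        ((volume.restrict (Ioc 0 a)).prod volume) :=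
      hg.1.comp_snd.indicator (measurableSet_le measurable_snd measurable_fst)
    exact (hg.norm.comp_snd _).mono' h_meas (.of_forall fun p => norm_indicator_le_norm_self _ _)
  rw [secondAntideriv, h_outer]
  simp_rw [← integral_indicator measurableSet_Iic]
  rw [integral_integral_swap h_int]
  simp_rw [integral_Ioc_indicator_Iic hg0]

lemma abs_min_le_abs_of_nonneg {c : ℝ} (hc : 0 ≤ c) (r : ℝ) : |min r c| ≤ |r| := by
  grind [abs_le, le_abs_self, neg_abs_le]

lemma max_zero_sub_max_sub_zero {c : ℝ} (hc : 0 ≤ c) (x : ℝ) :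
    max x 0 - max (x - c) 0 = min (max x 0) c := by
  grind

/-- `𝔼[min(r, δW)]` for a random variable `W` with density `ψ` on `(0, ∞)`. -/
noncomputable def truncatedMean (ψ : ℝ → ℝ) (δ r : ℝ) : ℝ :=
  ∫ w in Ioi 0, min r (δ * w) * ψ w

section truncatedMean

variable {ψ : ℝ → ℝ} {δ : ℝ}

lemma integrableOn_min_mul (hψ : Integrable ψ) (hδ : 0 ≤ δ) (r : ℝ) :
    IntegrableOn (fun w => min r (δ * w) * ψ w) (Ioi 0) := by
  refine (hψ.norm.const_mul |r|).integrableOn.mono'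
    ((by fun_prop : Continuous fun w => min r (δ * w)).aestronglyMeasurable.mul hψ.1.restrict) ?_
  filter_upwards [self_mem_ae_restrict measurableSet_Ioi] with w hw
  rw [norm_mul, Real.norm_eq_abs]
  exact mul_le_mul_of_nonneg_right (abs_min_le_abs_of_nonneg (mul_nonneg hδ hw.le) r)
    (norm_nonneg _)

lemma truncatedMean_nonneg (hψ0 : ∀ w, 0 ≤ ψ w) (hδ : 0 ≤ δ) {r : ℝ} (hr : 0 ≤ r) :
    0 ≤ truncatedMean ψ δ r :=
  setIntegral_nonneg measurableSet_Ioi fun w hw =>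
    mul_nonneg (le_min hr (mul_nonneg hδ (le_of_lt hw))) (hψ0 w)

lemma truncatedMean_le (hψ : Integrable ψ) (hψ0 : ∀ w, 0 ≤ ψ w) (hδ : 0 ≤ δ)
    (hψ1 : ∫ w in Ioi 0, ψ w = 1) (r : ℝ) : truncatedMean ψ δ r ≤ r :=
  calc truncatedMean ψ δ r ≤ ∫ w in Ioi 0, r * ψ w :=
        setIntegral_mono (integrableOn_min_mul hψ hδ r) (hψ.const_mul r).integrableOn
          fun w => mul_le_mul_of_nonneg_right (min_le_left _ _) (hψ0 w)
    _ = r := by rw [integral_const_mul, hψ1, mul_one]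

lemma truncatedMean_mono (hψ : Integrable ψ) (hψ0 : ∀ w, 0 ≤ ψ w) (hδ : 0 ≤ δ) :
    Monotone (truncatedMean ψ δ) := fun r r' h =>
  setIntegral_mono (integrableOn_min_mul hψ hδ r) (integrableOn_min_mul hψ hδ r')
    fun w => mul_le_mul_of_nonneg_right (min_le_min_right _ h) (hψ0 w)

lemma truncatedMean_add_le (hψ : Integrable ψ) (hψ0 : ∀ w, 0 ≤ ψ w) (hδ : 0 ≤ δ) {a b : ℝ}
    (ha : 0 ≤ a) (hb : 0 ≤ b) :
    truncatedMean ψ δ (a + b) ≤ truncatedMean ψ δ a + truncatedMean ψ δ b := by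
  rw [truncatedMean, truncatedMean, truncatedMean,
    ← integral_add (integrableOn_min_mul hψ hδ a) (integrableOn_min_mul hψ hδ b)]
  refine setIntegral_mono_on (integrableOn_min_mul hψ hδ _)
    ((integrableOn_min_mul hψ hδ a).add (integrableOn_min_mul hψ hδ b)) measurableSet_Ioi
    fun w hw => ?_
  have : 0 ≤ δ * w := mul_nonneg hδ (le_of_lt hw)
  rw [← add_mul]
  exact mul_le_mul_of_nonneg_right (by grind) (hψ0 w)

lemma truncatedMean_posPart_sub_le (hψ : Integrable ψ) (hψ0 : ∀ w, 0 ≤ ψ w) (hδ : 0 ≤ δ)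
    (u v : ℝ) :
    truncatedMean ψ δ (max (u - v) 0) ≤ truncatedMean ψ δ |u| + truncatedMean ψ δ |v| :=
  (truncatedMean_mono hψ hψ0 hδ (max_le (by grind [abs_sub, le_abs_self]) (by positivity))).trans
    (truncatedMean_add_le hψ hψ0 hδ (abs_nonneg u) (abs_nonneg v))

theorem max_zero_sub_secondAntideriv_rescale (hψ : Integrable ψ) (hψ_Iic : ∀ t ≤ 0, ψ t = 0)
    (hψ1 : ∫ w in Ioi 0, ψ w = 1) (hδ : 0 < δ) (ξ : ℝ) :
    max ξ 0 - secondAntideriv (fun s => δ⁻¹ * ψ (s / δ)) ξ = truncatedMean ψ δ (max ξ 0) := by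
  have h_rescale :
      secondAntideriv (fun s => δ⁻¹ * ψ (s / δ)) ξ = ∫ w, ψ w * max (ξ - δ * w) 0 := by
    rw [secondAntideriv_eq_integral_mul_posPart ((hψ.comp_div hδ.ne').const_mul δ⁻¹)
      fun t ht => by rw [hψ_Iic _ (div_nonpos_of_nonpos_of_nonneg ht hδ.le), mul_zero]]
    have h_subst := Measure.integral_comp_div (fun w => ψ w * max (ξ - δ * w) 0) δ
    simp only [mul_div_cancel₀ _ hδ.ne', abs_of_pos hδ, smul_eq_mul] at h_subst
    simp_rw [mul_assoc, integral_const_mul, h_subst, inv_mul_cancel_left₀ hδ.ne']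
  have h_Ioi : ∫ w, ψ w * max (ξ - δ * w) 0 = ∫ w in Ioi 0, ψ w * max (ξ - δ * w) 0 :=
    (setIntegral_eq_integral_of_forall_compl_eq_zero fun w hw => by
      rw [hψ_Iic w (not_lt.1 hw), zero_mul]).symm
  have h_pt : EqOn (fun w => ψ w * max (ξ - δ * w) 0)
      (fun w => max ξ 0 * ψ w - min (max ξ 0) (δ * w) * ψ w) (Ioi 0) := fun w hw => by
    dsimp only
    rw [← max_zero_sub_max_sub_zero (mul_nonneg hδ.le (le_of_lt hw))]
    ring
  rw [h_rescale, h_Ioi, setIntegral_congr_fun measurableSet_Ioi h_pt,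
    integral_sub (hψ.const_mul _).integrableOn (integrableOn_min_mul hψ hδ.le _),
    integral_const_mul, hψ1, mul_one, sub_sub_cancel, truncatedMean]

variable {α : Type*} [MeasurableSpace α] {ρ : Measure α} {f : α → ℝ}

lemma integrable_truncatedMean_comp (hψ : Integrable ψ) (hψ0 : ∀ w, 0 ≤ ψ w) (hδ : 0 ≤ δ)
    (hψ1 : ∫ w in Ioi 0, ψ w = 1) (hf : Integrable f ρ) (hf0 : ∀ x, 0 ≤ f x) :
    Integrable (fun x => truncatedMean ψ δ (f x)) ρ := by
  refine hf.mono' ((truncatedMean_mono hψ hψ0 hδ).measurable.comp_aemeasurable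
    hf.aemeasurable).aestronglyMeasurable (.of_forall fun x => ?_)
  rw [Real.norm_eq_abs, abs_of_nonneg (truncatedMean_nonneg hψ0 hδ (hf0 x))]
  exact truncatedMean_le hψ hψ0 hδ hψ1 (f x)

lemma integral_min_le_min_integral [IsProbabilityMeasure ρ] (hf : Integrable f ρ) (c : ℝ) :
    ∫ x, min (f x) c ∂ρ ≤ min (∫ x, f x ∂ρ) c := by
  have h_int : Integrable (fun x => min (f x) c) ρ := hf.inf (integrable_const c)
  refine le_min (integral_mono h_int hf fun x => min_le_left _ _) ?_
  calc ∫ x, min (f x) c ∂ρ ≤ ∫ _, c ∂ρ :=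
        integral_mono h_int (integrable_const c) fun x => min_le_right _ _
    _ = c := by simp

/-- Jensen's inequality for the concave function `truncatedMean ψ δ`. -/
lemma integral_truncatedMean_le (hψ : Integrable ψ) (hψ0 : ∀ w, 0 ≤ ψ w) (hδ : 0 ≤ δ)
    [IsProbabilityMeasure ρ] (hf : Integrable f ρ) :
    ∫ x, truncatedMean ψ δ (f x) ∂ρ ≤ truncatedMean ψ δ (∫ x, f x ∂ρ) := by
  have h_int : Integrable (Function.uncurry fun x w => min (f x) (δ * w) * ψ w)
      (ρ.prod (volume.restrict (Ioi 0))) := by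
    refine (hf.norm.mul_prod hψ.norm.integrableOn).mono' ?_ ?_
    · exact (hf.1.comp_fst.inf (measurable_snd.const_mul δ).aestronglyMeasurable).mul
        hψ.1.restrict.comp_snd
    · have h_pos : ∀ᵐ p ∂ρ.prod (volume.restrict (Ioi 0)), p.2 ∈ Ioi (0 : ℝ) :=
        (Measure.ae_prod_iff_ae_ae (measurableSet_Ioi.preimage measurable_snd)).2
          (.of_forall fun _ => ae_restrict_mem measurableSet_Ioi)
      filter_upwards [h_pos] with p hp
      rw [Real.norm_eq_abs, Function.uncurry_def, abs_mul]
      exact mul_le_mul_of_nonneg_right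
        (abs_min_le_abs_of_nonneg (mul_nonneg hδ (le_of_lt hp)) _) (abs_nonneg _)
  simp only [truncatedMean]
  rw [integral_integral_swap h_int]
  refine setIntegral_mono_on h_int.integral_prod_right (integrableOn_min_mul hψ hδ _)
    measurableSet_Ioi fun w hw => ?_
  rw [integral_mul_const]
  exact mul_le_mul_of_nonneg_right (integral_min_le_min_integral hf _) (hψ0 w)

end truncatedMean

/-- **Sandwich estimate (f1f2dd4).** Let `μ, ν` be Borel probability measures on `ℝ`
with finite first moments `M_μ = ∫|u| dμ`, `M_ν = ∫|v| dν`. Let `ψ` be a probability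
density supported in `(0, 1)`, `δ > 0`, `ψ_δ(ξ) = δ⁻¹ ψ(ξ/δ)`, and `ψ_{2,δ}` the second
antiderivative of `ψ_δ` vanishing at `-∞`. Then
`0 ≤ ∫∫ [(u - v)⁺ - ψ_{2,δ}(u - v)] dμ dν ≤ ∫_0^∞ [min(M_μ, δw) + min(M_ν, δw)] ψ(w) dw`. -/
theorem stmt7 (μ ν : Measure ℝ) [IsProbabilityMeasure μ] [IsProbabilityMeasure ν]
    (hμ : Integrable (fun u => |u|) μ) (hν : Integrable (fun v => |v|) ν)
    (ψ : ℝ → ℝ) (hψ0 : ∀ s, 0 ≤ ψ s) (hψint : Integrable ψ volume)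
    (hψ1 : (∫ s, ψ s) = 1) (hsupp : Function.support ψ ⊆ Set.Ioo 0 1)
    (δ : ℝ) (hδ : 0 < δ) :
    0 ≤ ∫ q : ℝ × ℝ,
        (max (q.1 - q.2) 0 - ∫ ζ in Set.Iic (q.1 - q.2), ∫ s in Set.Iic ζ, δ⁻¹ * ψ (s / δ))
        ∂(μ.prod ν) ∧
    ∫ q : ℝ × ℝ,
        (max (q.1 - q.2) 0 - ∫ ζ in Set.Iic (q.1 - q.2), ∫ s in Set.Iic ζ, δ⁻¹ * ψ (s / δ))
        ∂(μ.prod ν)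
      ≤ ∫ w in Set.Ioi (0:ℝ),
          (min (∫ u, |u| ∂μ) (δ * w) + min (∫ v, |v| ∂ν) (δ * w)) * ψ w := by
  have hψ_Iic : ∀ t ≤ 0, ψ t = 0 := fun t ht =>
    Function.notMem_support.1 fun h => (hsupp h).1.not_ge ht
  have hψ1' : ∫ w in Ioi 0, ψ w = 1 := by
    rwa [setIntegral_eq_integral_of_forall_compl_eq_zero (s := Ioi 0) fun w hw =>
      hψ_Iic w (not_lt.1 hw)]
  have h_key (ξ : ℝ) : max ξ 0 - ∫ ζ in Iic ξ, ∫ s in Iic ζ, δ⁻¹ * ψ (s / δ)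
      = truncatedMean ψ δ (max ξ 0) :=
    max_zero_sub_secondAntideriv_rescale hψint hψ_Iic hψ1' hδ ξ
  simp only [h_key]
  have hA_nonneg (q : ℝ × ℝ) := truncatedMean_nonneg hψ0 hδ.le (le_max_right (q.1 - q.2) 0)
  refine ⟨integral_nonneg hA_nonneg, ?_⟩
  have hAμ := integrable_truncatedMean_comp hψint hψ0 hδ.le hψ1' hμ fun u => abs_nonneg u
  have hAν := integrable_truncatedMean_comp hψint hψ0 hδ.le hψ1' hν fun v => abs_nonneg v
  calc ∫ q, truncatedMean ψ δ (max (q.1 - q.2) 0) ∂(μ.prod ν)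
      ≤ ∫ q, (truncatedMean ψ δ |q.1| + truncatedMean ψ δ |q.2|) ∂(μ.prod ν) :=
        integral_mono_of_nonneg (.of_forall hA_nonneg) ((hAμ.comp_fst ν).add (hAν.comp_snd μ))
          (.of_forall fun q => truncatedMean_posPart_sub_le hψint hψ0 hδ.le q.1 q.2)
    _ = ∫ u, truncatedMean ψ δ |u| ∂μ + ∫ v, truncatedMean ψ δ |v| ∂ν := by
        rw [integral_add (hAμ.comp_fst ν) (hAν.comp_snd μ),
          integral_fun_fst (fun u => truncatedMean ψ δ |u|),
          integral_fun_snd (fun v => truncatedMean ψ δ |v|)]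
        simp
    _ ≤ truncatedMean ψ δ (∫ u, |u| ∂μ) + truncatedMean ψ δ (∫ v, |v| ∂ν) :=
        add_le_add (integral_truncatedMean_le hψint hψ0 hδ.le hμ)
          (integral_truncatedMean_le hψint hψ0 hδ.le hν)
    _ = _ := by
        simp_rw [truncatedMean, add_mul]
        exact (integral_add (integrableOn_min_mul hψint hδ.le _)
          (integrableOn_min_mul hψint hδ.le _)).symm
end

section
/- Let p ≥ 1 and C ≥ 0, and set Γ(ξ,ζ) = C(1+|ξ|^{p−1}+|ζ|^{p−1}). Let 0 < δ ≤ 1 and let ψ_δ be a probability density on ℝ supported in (0,δ). Define Υ(ξ,ζ) = ∫_{ζ}^{+∞} ∫_{−∞}^{ξ} Γ(ξ′,ζ′) |ξ′−ζ′| ψ_δ(ξ′−ζ′) dξ′ dζ′. Then there exists a constant C_p, depending only on C and p, such that Υ(ξ,ζ) ≤ C_p (1+|ξ|^p+|ζ|^p) δ for all ξ, ζ ∈ ℝ and all δ ∈ (0,1]. -/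
open MeasureTheory ENNReal

/-- **Estimate (ffp).** Let `p ≥ 1`, `C ≥ 0` and `Γ(ξ, ζ) = C (1 + |ξ|^{p-1} + |ζ|^{p-1})`.
There exists a constant `C_p`, depending only on `C` and `p`, such that for every
`δ ∈ (0, 1]`, every probability density `ψ_δ` supported in `(0, δ)`, and all `ξ, ζ ∈ ℝ`,
`Υ(ξ, ζ) = ∫_{ζ}^{∞} ∫_{-∞}^{ξ} Γ(ξ', ζ') |ξ' - ζ'| ψ_δ(ξ' - ζ') dξ' dζ'
  ≤ C_p (1 + |ξ|^p + |ζ|^p) δ` (stated as a `lintegral` bound). -/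
theorem stmt8 (p C : ℝ) (hp : 1 ≤ p) (hC : 0 ≤ C) :
    ∃ Cp : ℝ, ∀ δ : ℝ, 0 < δ → δ ≤ 1 →
      ∀ ψδ : ℝ → ℝ, (∀ s, 0 ≤ ψδ s) → Integrable ψδ volume → (∫ s, ψδ s) = 1 →
        Function.support ψδ ⊆ Set.Ioo 0 δ →
        ∀ ξ ζ : ℝ,
          (∫⁻ ζ' in Set.Ioi ζ, ∫⁻ ξ' in Set.Iic ξ,
              ENNReal.ofReal
                (C * (1 + |ξ'| ^ (p - 1) + |ζ'| ^ (p - 1)) * |ξ' - ζ'| * ψδ (ξ' - ζ')))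
            ≤ ENNReal.ofReal (Cp * (1 + |ξ| ^ p + |ζ| ^ p) * δ) := by
  refine ⟨6 * C, ?_⟩
  intro δ hδ hδ1 ψδ hψ0 hψint hψ1 hsupp ξ ζ
  set M : ℝ := max |ξ| |ζ| with hMdef
  have hM0 : (0:ℝ) ≤ M := le_trans (abs_nonneg ξ) (le_max_left _ _)
  have hMp1 : (0:ℝ) ≤ M ^ (p - 1) := Real.rpow_nonneg hM0 _
  set K : ℝ := C * (1 + 2 * M ^ (p - 1)) * δ with hKdef
  have hK0 : 0 ≤ K := by
    apply mul_nonneg (mul_nonneg hC (by linarith)) hδ.le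
  have hψzero : ∀ s : ℝ, s ∉ Set.Ioo (0:ℝ) δ → ψδ s = 0 := by
    intro s hs
    by_contra h
    exact hs (hsupp h)
  -- inner ψ integral is at most 1
  have hJ : ∀ ζ' : ℝ,
      (∫⁻ ξ' in Set.Iic ξ, ENNReal.ofReal (ψδ (ξ' - ζ'))) ≤ 1 := by
    intro ζ'
    calc (∫⁻ ξ' in Set.Iic ξ, ENNReal.ofReal (ψδ (ξ' - ζ')))
        ≤ ∫⁻ ξ', ENNReal.ofReal (ψδ (ξ' - ζ')) := setLIntegral_le_lintegral _ _
      _ = ∫⁻ s, ENNReal.ofReal (ψδ s) :=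
          lintegral_sub_right_eq_self (fun s => ENNReal.ofReal (ψδ s)) ζ'
      _ = ENNReal.ofReal (∫ s, ψδ s) :=
          (ofReal_integral_eq_lintegral_ofReal hψint
            (Filter.Eventually.of_forall hψ0)).symm
      _ = 1 := by rw [hψ1, ENNReal.ofReal_one]
  -- pointwise bound on the inner integrand, for ζ' > ζ and ξ' ≤ ξ
  have hpt : ∀ ζ' ∈ Set.Ioi ζ, ∀ ξ' ∈ Set.Iic ξ,
      C * (1 + |ξ'| ^ (p - 1) + |ζ'| ^ (p - 1)) * |ξ' - ζ'| * ψδ (ξ' - ζ')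
        ≤ K * ψδ (ξ' - ζ') := by
    intro ζ' hζ' ξ' hξ'
    rcases eq_or_ne (ψδ (ξ' - ζ')) 0 with h0 | h0
    · rw [h0, mul_zero, mul_zero]
    · have hmem : ξ' - ζ' ∈ Set.Ioo (0:ℝ) δ := hsupp h0
      have h1 : ζ' < ξ' := by
        have := hmem.1; linarith
      have h2 : ζ < ζ' := hζ'
      have h3 : ξ' ≤ ξ := hξ'
      have hξ'M : |ξ'| ≤ M := by
        rw [abs_le]
        constructor
        · have : -|ζ| ≤ ζ := neg_abs_le ζ
          have : -M ≤ -|ζ| := neg_le_neg (le_max_right _ _)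
          linarith [neg_abs_le ζ, (le_max_right |ξ| |ζ| : |ζ| ≤ M)]
        · exact le_trans h3 (le_trans (le_abs_self ξ) (le_max_left _ _))
      have hζ'M : |ζ'| ≤ M := by
        rw [abs_le]
        constructor
        · linarith [neg_abs_le ζ, (le_max_right |ξ| |ζ| : |ζ| ≤ M)]
        · have : ξ' ≤ |ξ| := le_trans h3 (le_abs_self ξ)
          have : ξ' ≤ M := le_trans this (le_max_left _ _)
          linarith
      have hr1 : |ξ'| ^ (p - 1) ≤ M ^ (p - 1) :=
        Real.rpow_le_rpow (abs_nonneg _) hξ'M (by linarith)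
      have hr2 : |ζ'| ^ (p - 1) ≤ M ^ (p - 1) :=
        Real.rpow_le_rpow (abs_nonneg _) hζ'M (by linarith)
      have habs : |ξ' - ζ'| ≤ δ := by
        rw [abs_of_pos (by linarith : (0:ℝ) < ξ' - ζ')]
        linarith [hmem.2]
      have hψnn := hψ0 (ξ' - ζ')
      have hfac : C * (1 + |ξ'| ^ (p - 1) + |ζ'| ^ (p - 1)) * |ξ' - ζ'| ≤ K := by
        have hA : 1 + |ξ'| ^ (p - 1) + |ζ'| ^ (p - 1) ≤ 1 + 2 * M ^ (p - 1) := by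
          linarith
        have hA0 : (0:ℝ) ≤ 1 + |ξ'| ^ (p - 1) + |ζ'| ^ (p - 1) := by
          have := Real.rpow_nonneg (abs_nonneg ξ') (p - 1)
          have := Real.rpow_nonneg (abs_nonneg ζ') (p - 1)
          linarith
        calc C * (1 + |ξ'| ^ (p - 1) + |ζ'| ^ (p - 1)) * |ξ' - ζ'|
            ≤ C * (1 + 2 * M ^ (p - 1)) * δ := by
              apply mul_le_mul (mul_le_mul le_rfl hA hA0 hC) habs (abs_nonneg _)
              exact mul_nonneg hC (by linarith)
          _ = K := rfl
      exact mul_le_mul_of_nonneg_right hfac hψnn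
  -- bound on the inner lintegral for ζ' > ζ
  have hinner : ∀ ζ' ∈ Set.Ioi ζ,
      (∫⁻ ξ' in Set.Iic ξ,
          ENNReal.ofReal
            (C * (1 + |ξ'| ^ (p - 1) + |ζ'| ^ (p - 1)) * |ξ' - ζ'| * ψδ (ξ' - ζ')))
        ≤ (Set.Iio ξ).indicator (fun _ => ENNReal.ofReal K) ζ' := by
    intro ζ' hζ'
    by_cases hlt : ζ' < ξ
    · rw [Set.indicator_of_mem (by exact hlt : ζ' ∈ Set.Iio ξ)]
      calc (∫⁻ ξ' in Set.Iic ξ,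
              ENNReal.ofReal
                (C * (1 + |ξ'| ^ (p - 1) + |ζ'| ^ (p - 1)) * |ξ' - ζ'| * ψδ (ξ' - ζ')))
          ≤ ∫⁻ ξ' in Set.Iic ξ, ENNReal.ofReal K * ENNReal.ofReal (ψδ (ξ' - ζ')) := by
            apply setLIntegral_mono' measurableSet_Iic
            intro ξ' hξ'
            rw [← ENNReal.ofReal_mul hK0]
            exact ENNReal.ofReal_le_ofReal (hpt ζ' hζ' ξ' hξ')
        _ = ENNReal.ofReal K * ∫⁻ ξ' in Set.Iic ξ, ENNReal.ofReal (ψδ (ξ' - ζ')) :=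
            lintegral_const_mul' _ _ ENNReal.ofReal_ne_top
        _ ≤ ENNReal.ofReal K * 1 := mul_le_mul_right (hJ ζ') _
        _ = ENNReal.ofReal K := mul_one _
    · rw [Set.indicator_of_notMem (by simpa using hlt : ζ' ∉ Set.Iio ξ)]
      have : (∫⁻ ξ' in Set.Iic ξ,
          ENNReal.ofReal
            (C * (1 + |ξ'| ^ (p - 1) + |ζ'| ^ (p - 1)) * |ξ' - ζ'| * ψδ (ξ' - ζ')))
          = ∫⁻ _ in Set.Iic ξ, (0 : ℝ≥0∞) := by
        apply setLIntegral_congr_fun measurableSet_Iic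
        intro ξ' hξ'
        have hψz : ψδ (ξ' - ζ') = 0 := by
          apply hψzero
          intro hmem
          have := hmem.1
          have hle : ξ' ≤ ζ' := le_trans hξ' (not_lt.1 hlt)
          linarith
        simp only [hψz, mul_zero, ENNReal.ofReal_zero]
      rw [this, lintegral_zero]
  -- put everything together
  calc (∫⁻ ζ' in Set.Ioi ζ, ∫⁻ ξ' in Set.Iic ξ,
          ENNReal.ofReal
            (C * (1 + |ξ'| ^ (p - 1) + |ζ'| ^ (p - 1)) * |ξ' - ζ'| * ψδ (ξ' - ζ')))
      ≤ ∫⁻ ζ' in Set.Ioi ζ, (Set.Iio ξ).indicator (fun _ => ENNReal.ofReal K) ζ' :=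
        setLIntegral_mono' measurableSet_Ioi hinner
    _ = ENNReal.ofReal K * volume (Set.Iio ξ ∩ Set.Ioi ζ) := by
        rw [lintegral_indicator measurableSet_Iio,
          Measure.restrict_restrict measurableSet_Iio, lintegral_const,
          Measure.restrict_apply MeasurableSet.univ, Set.univ_inter]
    _ = ENNReal.ofReal K * ENNReal.ofReal (ξ - ζ) := by
        rw [Set.inter_comm, Set.Ioi_inter_Iio, Real.volume_Ioo]
    _ = ENNReal.ofReal (K * (ξ - ζ)) := (ENNReal.ofReal_mul hK0).symm
    _ ≤ ENNReal.ofReal (6 * C * (1 + |ξ| ^ p + |ζ| ^ p) * δ) := by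
        apply ENNReal.ofReal_le_ofReal
        -- final arithmetic
        have hsum : ξ - ζ ≤ 2 * M := by
          have h1 : ξ ≤ |ξ| := le_abs_self ξ
          have h2 : -ζ ≤ |ζ| := neg_le_abs ζ
          have h3 : |ξ| ≤ M := le_max_left _ _
          have h4 : |ζ| ≤ M := le_max_right _ _
          linarith
        have hMpsum : M ^ p ≤ |ξ| ^ p + |ζ| ^ p := by
          have hx : (0:ℝ) ≤ |ξ| ^ p := Real.rpow_nonneg (abs_nonneg _) _
          have hz : (0:ℝ) ≤ |ζ| ^ p := Real.rpow_nonneg (abs_nonneg _) _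
          rcases max_cases |ξ| |ζ| with ⟨hm, _⟩ | ⟨hm, _⟩ <;>
            rw [hMdef, hm] <;> linarith
        have hMle : M ≤ 1 + M ^ p := by
          rcases le_or_gt M 1 with hM1 | hM1
          · have : (0:ℝ) ≤ M ^ p := Real.rpow_nonneg hM0 _
            linarith
          · have : M ^ (1:ℝ) ≤ M ^ p :=
              Real.rpow_le_rpow_of_exponent_le hM1.le hp
            rw [Real.rpow_one] at this
            linarith
        rcases eq_or_lt_of_le hM0 with hMz | hMz
        · -- M = 0 : then ξ = ζ = 0
          have hM' : max |ξ| |ζ| = 0 := by rw [← hMdef, ← hMz]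
          have hξ0' : ξ = 0 :=
            abs_eq_zero.1 (le_antisymm (hM' ▸ le_max_left |ξ| |ζ|) (abs_nonneg _))
          have hζ0' : ζ = 0 :=
            abs_eq_zero.1 (le_antisymm (hM' ▸ le_max_right |ξ| |ζ|) (abs_nonneg _))
          have hrhs : 0 ≤ 6 * C * (1 + |ξ| ^ p + |ζ| ^ p) * δ := by
            have hx : (0:ℝ) ≤ |ξ| ^ p := Real.rpow_nonneg (abs_nonneg _) _
            have hz : (0:ℝ) ≤ |ζ| ^ p := Real.rpow_nonneg (abs_nonneg _) _
            apply mul_nonneg (mul_nonneg (by linarith) (by linarith)) hδ.le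
          have : K * (ξ - ζ) = 0 := by rw [hξ0', hζ0']; ring
          linarith
        · have hpow : M ^ (p - 1) * M = M ^ p := by
            have h := (Real.rpow_add hMz (p - 1) 1).symm
            rw [Real.rpow_one] at h
            rw [h]
            norm_num
          have hCδ : (0:ℝ) ≤ C * δ := mul_nonneg hC hδ.le
          have hKξζ : K * (ξ - ζ) ≤ C * δ * (2 * M + 4 * M ^ p) := by
            rw [hKdef]
            have h1 : (0:ℝ) ≤ 1 + 2 * M ^ (p - 1) := by linarith
            have : (1 + 2 * M ^ (p - 1)) * (ξ - ζ) ≤ (1 + 2 * M ^ (p - 1)) * (2 * M) :=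
              mul_le_mul_of_nonneg_left hsum h1
            have hexp : (1 + 2 * M ^ (p - 1)) * (2 * M) = 2 * M + 4 * M ^ p := by
              have := hpow
              nlinarith [hpow]
            nlinarith [hCδ, this, hexp]
          have hfin : C * δ * (2 * M + 4 * M ^ p) ≤ 6 * C * (1 + |ξ| ^ p + |ζ| ^ p) * δ := by
            have hMp0 : (0:ℝ) ≤ M ^ p := Real.rpow_nonneg hM0 _
            nlinarith [hCδ, hMle, hMpsum, hMp0]
          linarith
end
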